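/- arXiv:2309.14527 — 10 statements merged into one kernel-verified Lean document; each statement's English description precedes it below -/
import Mathlib

section
/- Let g = a·tⁱ with a ∈ A and i > 0, and let b ∈ A with b ≠ 1. Then there exists a finite-index normal subgroup Ḡ of G such that ⟨g⟩·Ḡ ∩ A = Ḡ ∩ A and b ∉ Ḡ, where ⟨g⟩ denotes the cyclic subgroup of G generated by g (note ⟨g⟩·Ḡ is a subgroup since Ḡ is normal). -/
open Subgroup Pointwise

/-- The free abelian group of rank `n`, written multiplicatively. -/
abbrev FreeAb (n : ℕ) : Type := Multiplicative (Fin n → ℤ)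

/-- The isomorphism from `A = ⊤` onto the image `φ(A)` induced by an injective
endomorphism `φ` of the free abelian group `A`. -/
noncomputable def ascIso {n : ℕ} (φ : FreeAb n →* FreeAb n) (hφ : Function.Injective φ) :
    (⊤ : Subgroup (FreeAb n)) ≃* φ.range :=
  Subgroup.topEquiv.trans (MonoidHom.ofInjective hφ)

/-- The ascending HNN extension `G = A∗_φ = ⟨A, t ∣ t·a·t⁻¹ = φ(a) for a ∈ A⟩`,
realized as the HNN extension of `A` over the subgroups `⊤` and `φ.range`. -/
abbrev AscHNN {n : ℕ} (φ : FreeAb n →* FreeAb n) (hφ : Function.Injective φ) : Type :=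
  HNNExtension (FreeAb n) ⊤ φ.range (ascIso φ hφ)

/-!
Choose a prime `p` dividing neither `det φ` nor some coordinate of `b`. Then `φ` induces an
automorphism `θ` of `V = A/pA`, and `G` acts on the finite set `V` by affine maps (`A` by
translations, `t` by `θ`); in this finite quotient `G/K₀` the element `b` survives. Let `E` be the
exponent of `G/K₀` and record in addition the `t`-exponent sum modulo `iE`. In the resulting
finite quotient the image of `g = a tⁱ` has order dividing `E`, while its `t`-exponent sum `i`
has order exactly `E` in `ℤ/iE`. So if `gᵏ y ∈ A` with `y` in the kernel, the image of `gᵏ`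
has `t`-exponent sum `0` and is therefore trivial.
-/

theorem zpow_eq_one_of_map_zpow_eq_one {F H : Type*} [Group F] [Group H] (f : F →* H) {x : F}
    (hx : orderOf x ∣ orderOf (f x)) {k : ℤ} (hk : f x ^ k = 1) : x ^ k = 1 :=
  orderOf_dvd_iff_zpow_eq_one.mp (Int.natCast_dvd_natCast.mpr hx |>.trans
    (orderOf_dvd_iff_zpow_eq_one.mpr hk))

theorem orderOf_ofAdd_natCast_mul (i E : ℕ) (hi : 0 < i) (hE : E ≠ 0) :
    orderOf (Multiplicative.ofAdd (i : ZMod (i * E))) = E := by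
  rw [orderOf_ofAdd_eq_addOrderOf, ZMod.addOrderOf_coe _ (by positivity)]
  simp [Nat.gcd_mul_right_left, hi.ne']

theorem exists_normal_finiteIndex_le_mem_zpowers_mul_iff {G : Type*} [Group G]
    (χ : G →* Multiplicative ℤ) {g : G} {i : ℕ} (hi : 0 < i)
    (hg : χ g = Multiplicative.ofAdd (i : ℤ)) (K₀ : Subgroup G) [K₀.Normal] [K₀.FiniteIndex] :
    ∃ K : Subgroup G, K.Normal ∧ K.FiniteIndex ∧ K ≤ K₀ ∧
      ∀ c ∈ χ.ker, c ∈ (zpowers g : Set G) * K ↔ c ∈ K := by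
  set E := Monoid.exponent (G ⧸ K₀)
  have hE : E ≠ 0 := Monoid.exponent_ne_zero_of_finite
  have : NeZero (i * E) := ⟨by positivity⟩
  let ψ : G →* (G ⧸ K₀) × Multiplicative (ZMod (i * E)) :=
    (QuotientGroup.mk' K₀).prod ((Int.castAddHom (ZMod (i * E))).toMultiplicative.comp χ)
  have hψg_snd : (ψ g).2 = Multiplicative.ofAdd (i : ZMod (i * E)) := by
    simp [ψ, hg]
  have hψg : orderOf (ψ g) ∣ orderOf (MonoidHom.snd _ _ (ψ g)) := by
    rw [MonoidHom.coe_snd, hψg_snd, orderOf_ofAdd_natCast_mul i E hi hE]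
    refine orderOf_dvd_of_pow_eq_one (Prod.ext (Monoid.pow_exponent_eq_one _) ?_)
    rw [Prod.pow_snd, hψg_snd, Prod.snd_one, ← ofAdd_nsmul, nsmul_eq_mul, ofAdd_eq_one]
    exact_mod_cast (ZMod.natCast_eq_zero_iff _ _).mpr (dvd_of_eq (mul_comm i E))
  refine ⟨ψ.ker, inferInstance, inferInstance, fun x hx => ?_, fun c hc => ⟨?_, ?_⟩⟩
  · simpa [ψ] using congrArg Prod.fst hx
  · rintro ⟨_, ⟨k, rfl⟩, y, hy, rfl⟩
    have hk : MonoidHom.snd _ _ (ψ (g ^ k * y)) = 1 := by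
      simp [ψ, MonoidHom.mem_ker.mp hc]
    rw [map_mul, map_zpow, MonoidHom.mem_ker.mp hy, mul_one, map_zpow] at hk
    simpa [MonoidHom.mem_ker.mp hy] using zpow_eq_one_of_map_zpow_eq_one _ hψg hk
  · exact fun hcK => ⟨1, one_mem _, c, hcK, one_mul c⟩

theorem exists_prime_not_dvd {m : ℤ} (hm : m ≠ 0) : ∃ p : ℕ, p.Prime ∧ ¬ (p : ℤ) ∣ m := by
  obtain ⟨p, hle, hp⟩ := Nat.exists_infinite_primes (m.natAbs + 1)
  refine ⟨p, hp, fun h => ?_⟩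
  have := Nat.le_of_dvd (Int.natAbs_pos.mpr hm) (Int.natCast_dvd.mp h)
  omega

namespace HNNExtension

variable {G : Type*} [Group G] {H K : Subgroup G} {e : H ≃* K}

def tExponentSum : HNNExtension G H K e →* Multiplicative ℤ :=
  lift 1 (Multiplicative.ofAdd 1) fun _ => by simp

@[simp] theorem tExponentSum_of (g : G) : tExponentSum (of g : HNNExtension G H K e) = 1 :=
  lift_of ..

@[simp] theorem tExponentSum_t :
    tExponentSum (t : HNNExtension G H K e) = Multiplicative.ofAdd 1 :=
  lift_t ..

theorem exists_normal_finiteIndex_notMem_of_map_ne_one {V : Type*} [Group V] [Finite V]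
    (f : G →* V) (θ : MulAut V) (hθ : ∀ h : H, θ (f h) = f (e h)) {b : G} (hb : f b ≠ 1) :
    ∃ N : Subgroup (HNNExtension G H K e), N.Normal ∧ N.FiniteIndex ∧ of b ∉ N := by
  -- the affine action on `V`: `g` acts by translation by `f g`, `t` by `θ`
  let ψ : HNNExtension G H K e →* Equiv.Perm V :=
    lift ((MulAction.toPermHom V V).comp f) θ.toEquiv fun h => by
      ext v
      simp [hθ]
  refine ⟨ψ.ker, inferInstance, inferInstance, fun hbN => hb ?_⟩
  simpa [ψ] using congrArg (· (1 : V)) (MonoidHom.mem_ker.mp hbN)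

end HNNExtension

namespace FreeAb

open Matrix

variable {n : ℕ}

def reduce (p : ℕ) : FreeAb n →* Multiplicative (Fin n → ZMod p) :=
  ((Int.castAddHom (ZMod p)).compLeft (Fin n)).toMultiplicative

def toMatrix (φ : FreeAb n →* FreeAb n) : Matrix (Fin n) (Fin n) ℤ :=
  LinearMap.toMatrix' (AddMonoidHom.toMultiplicative.symm φ).toIntLinearMap

theorem toAdd_map (φ : FreeAb n →* FreeAb n) (x : FreeAb n) :
    (φ x).toAdd = toMatrix φ *ᵥ x.toAdd := by
  rw [toMatrix, ← Matrix.toLin'_apply, Matrix.toLin'_toMatrix']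
  rfl

theorem det_toMatrix_ne_zero {φ : FreeAb n →* FreeAb n} (hφ : Function.Injective φ) :
    (toMatrix φ).det ≠ 0 := by
  intro h
  obtain ⟨v, hv, hv0⟩ := Matrix.exists_mulVec_eq_zero_iff.mpr h
  refine hv (ofAdd_eq_one.mp (hφ ?_))
  rw [map_one, ← toAdd_eq_zero, toAdd_map]
  exact hv0

theorem reduce_map (φ : FreeAb n →* FreeAb n) (p : ℕ) (x : FreeAb n) :
    reduce p (φ x) =
      Multiplicative.ofAdd ((toMatrix φ).map (Int.cast : ℤ → ZMod p) *ᵥ (reduce p x).toAdd) := by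
  ext i
  simp only [reduce, AddMonoidHom.toMultiplicative_apply_apply, toAdd_map, toAdd_ofAdd]
  exact RingHom.map_mulVec (Int.castRingHom (ZMod p)) _ _ i

theorem exists_mulAut_reduce_map (φ : FreeAb n →* FreeAb n) {p : ℕ} [Fact p.Prime]
    (hp : ¬ (p : ℤ) ∣ (toMatrix φ).det) :
    ∃ θ : MulAut (Multiplicative (Fin n → ZMod p)), ∀ x, θ (reduce p x) = reduce p (φ x) := by
  set M := (toMatrix φ).map (Int.cast : ℤ → ZMod p)
  have hM : IsUnit M := by
    have hdet : M.det = ((toMatrix φ).det : ZMod p) :=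
      ((Int.castRingHom (ZMod p)).map_det (toMatrix φ)).symm
    rw [Matrix.isUnit_iff_isUnit_det, hdet]
    exact Ne.isUnit (mt (ZMod.intCast_zmod_eq_zero_iff_dvd _ p).mp hp)
  let f : Multiplicative (Fin n → ZMod p) →* Multiplicative (Fin n → ZMod p) :=
    M.mulVecLin.toAddMonoidHom.toMultiplicative
  have hf : Function.Injective f := Matrix.mulVec_injective_iff_isUnit.mpr hM
  exact ⟨MulEquiv.ofBijective f (Finite.injective_iff_bijective.mp hf),
    fun x => (reduce_map φ p x).symm⟩

end FreeAb

theorem AscHNN.exists_normal_finiteIndex_notMem_of_ne_one {n : ℕ} {φ : FreeAb n →* FreeAb n}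
    (hφ : Function.Injective φ) {b : FreeAb n} (hb : b ≠ 1) :
    ∃ N : Subgroup (AscHNN φ hφ), N.Normal ∧ N.FiniteIndex ∧ HNNExtension.of b ∉ N := by
  obtain ⟨j, hj⟩ : ∃ j, b.toAdd j ≠ 0 := Function.ne_iff.mp (toAdd_eq_zero.not.mpr hb)
  obtain ⟨p, hp, hpdvd⟩ :=
    exists_prime_not_dvd (mul_ne_zero (FreeAb.det_toMatrix_ne_zero hφ) hj)
  have : Fact p.Prime := ⟨hp⟩
  obtain ⟨θ, hθ⟩ := FreeAb.exists_mulAut_reduce_map φ fun h => hpdvd (h.mul_right _)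
  refine HNNExtension.exists_normal_finiteIndex_notMem_of_map_ne_one (FreeAb.reduce p) θ
    (fun h => hθ h) fun hb' => hpdvd (Dvd.dvd.mul_left ?_ _)
  exact (ZMod.intCast_zmod_eq_zero_iff_dvd _ p).mp
    (congrFun (congrArg Multiplicative.toAdd hb') j)

theorem stmt_4_general (n : ℕ)
    (φ : FreeAb n →* FreeAb n) (hφ : Function.Injective φ)
    (a : FreeAb n) (i : ℕ) (hi : 0 < i)
    (b : FreeAb n) (hb : b ≠ 1) :
    ∃ Gbar : Subgroup (AscHNN φ hφ), Gbar.Normal ∧ Gbar.FiniteIndex ∧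
      (∀ c : FreeAb n,
        (HNNExtension.of c : AscHNN φ hφ) ∈
            ((Subgroup.zpowers ((HNNExtension.of a : AscHNN φ hφ) *
                (HNNExtension.t : AscHNN φ hφ) ^ i) : Set (AscHNN φ hφ)) *
              (Gbar : Set (AscHNN φ hφ))) ↔
          (HNNExtension.of c : AscHNN φ hφ) ∈ Gbar) ∧
      (HNNExtension.of b : AscHNN φ hφ) ∉ Gbar := by
  obtain ⟨K₀, hK₀, hK₀fin, hbK₀⟩ := AscHNN.exists_normal_finiteIndex_notMem_of_ne_one hφ hb
  obtain ⟨K, hK, hKfin, hKK₀, hsep⟩ :=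
    exists_normal_finiteIndex_le_mem_zpowers_mul_iff HNNExtension.tExponentSum hi
      (g := HNNExtension.of a * HNNExtension.t ^ i) (by simp [← ofAdd_nsmul]) K₀
  exact ⟨K, hK, hKfin, fun c => hsep _ (by simp), fun hbK => hbK₀ (hKK₀ hbK)⟩

/-- Let `g = a·t^i` with `a ∈ A`, `i > 0`, and let `b ∈ A` with
`b ≠ 1`.  Then there is a finite-index normal subgroup `Gbar` of `G = A∗_φ` such that
`⟨g⟩·Gbar ∩ A = Gbar ∩ A` and `b ∉ Gbar`. -/
theorem stmt_4 (n : ℕ) (hn : 1 ≤ n)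
    (φ : FreeAb n →* FreeAb n) (hφ : Function.Injective φ)
    (a : FreeAb n) (i : ℕ) (hi : 0 < i)
    (b : FreeAb n) (hb : b ≠ 1) :
    ∃ Gbar : Subgroup (AscHNN φ hφ), Gbar.Normal ∧ Gbar.FiniteIndex ∧
      (∀ c : FreeAb n,
        (HNNExtension.of c : AscHNN φ hφ) ∈
            ((Subgroup.zpowers ((HNNExtension.of a : AscHNN φ hφ) *
                (HNNExtension.t : AscHNN φ hφ) ^ i) : Set (AscHNN φ hφ)) *
              (Gbar : Set (AscHNN φ hφ))) ↔
          (HNNExtension.of c : AscHNN φ hφ) ∈ Gbar) ∧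
      (HNNExtension.of b : AscHNN φ hφ) ∉ Gbar :=
  stmt_4_general n φ hφ a i hi b hb
end

section
/- Let g ∈ G be an element such that no conjugate of g lies in A, i.e. there is no x ∈ G with x·g·x⁻¹ ∈ A. Then the cyclic subgroup ⟨g⟩ is separable in G: for every h ∈ G with h ∉ ⟨g⟩ there is a finite-index normal subgroup N of G with h ∉ ⟨g⟩·N. -/
open Subgroup Pointwise

open scoped Matrix

/-!
Let `m` be the `t`-exponent of `g`. It is nonzero: an element of `t`-exponent zero has the form
`t⁻ᵖ a tᵖ` and so is conjugate into `A`. If `m` does not divide the `t`-exponent of `h`, the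
`t`-exponent modulo `|m|` separates `h` from `⟨g⟩`. Otherwise `h = gʲ t⁻ᵖ a tᵖ` with `a ≠ 1`.
Pick a prime `Q` dividing neither `det φ` nor a nonzero coordinate of `a`; then `φ` induces an
automorphism `Φ` of `A/QA`, and reducing `A` mod `Q` while sending `t` to the generator of `ℤ/M`
defines a map of `G` to the finite group `A/QA ⋊ ℤ/M`, where `M = |m| · ord Φ · Q`. The image of
`g` has `ℤ/M`-coordinate `m`, so any power of it lying in `A/QA` is a power of its
`(ord Φ · Q)`-th power, which is trivial. Hence the image of `h` would be the nontrivial element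
`t⁻ᵖ (a mod Q) tᵖ` of `A/QA`, which is not in the image of `⟨g⟩`.
-/

theorem exists_normal_finiteIndex_notMem_zpowers_mul {G F : Type*} [Group G] [Group F]
    [Finite F] (ρ : G →* F) {g h : G} (hρ : ρ h ∉ zpowers (ρ g)) :
    ∃ N : Subgroup G, N.Normal ∧ N.FiniteIndex ∧ h ∉ (zpowers g : Set G) * N := by
  refine ⟨ρ.ker, inferInstance, inferInstance, ?_⟩
  rintro ⟨_, ⟨k, rfl⟩, ν, hν, rfl⟩
  exact hρ ⟨k, by simp [MonoidHom.mem_ker.1 hν]⟩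

namespace SemidirectProduct

variable {N G : Type*} [Group N] [Group G] {θ : G →* MulAut N}

instance finite [Finite N] [Finite G] : Finite (N ⋊[θ] G) :=
  Finite.of_equiv _ equivProd.symm

theorem left_pow_of_map_right_eq_one {z : N ⋊[θ] G} (hz : θ z.right = 1) (k : ℕ) :
    (z ^ k).left = z.left ^ k := by
  induction k with
  | zero => simp
  | succ k ih =>
    have hright : (z ^ k).right = z.right ^ k := map_pow rightHom z k
    simp [pow_succ, ih, hright, hz]

end SemidirectProduct

theorem ZMod.ofAdd_intCast_zpow_eq_one_iff {M : ℕ} (m i : ℤ) :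
    Multiplicative.ofAdd (m : ZMod M) ^ i = 1 ↔ (M : ℤ) ∣ m * i := by
  rw [← ofAdd_zsmul, ofAdd_eq_one, zsmul_eq_mul, mul_comm, ← Int.cast_mul,
    ZMod.intCast_zmod_eq_zero_iff_dvd]

namespace MulAut

variable {X : Type*} [Group X]

def zmodHom (Φ : MulAut X) (M : ℕ) (hM : Φ ^ M = 1) : Multiplicative (ZMod M) →* MulAut X :=
  AddMonoidHom.toMultiplicativeLeft
    (ZMod.lift M ⟨zmultiplesHom _ (Additive.ofMul Φ), by simp [← ofMul_pow, hM]⟩)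

@[simp]
theorem zmodHom_ofAdd_intCast (Φ : MulAut X) (M : ℕ) (hM : Φ ^ M = 1) (k : ℤ) :
    zmodHom Φ M hM (Multiplicative.ofAdd (k : ZMod M)) = Φ ^ k := by
  change Additive.toMul (ZMod.lift M _ (k : ZMod M)) = _
  simp [ZMod.lift_coe]

noncomputable def twistPeriod (Φ : MulAut X) (m : ℤ) : ℕ :=
  m.natAbs * (orderOf Φ * Monoid.exponent X)

theorem pow_twistPeriod (Φ : MulAut X) (m : ℤ) : Φ ^ twistPeriod Φ m = 1 :=
  orderOf_dvd_iff_pow_eq_one.1 ⟨m.natAbs * Monoid.exponent X, by rw [twistPeriod]; ring⟩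

theorem twistPeriod_ne_zero [Finite X] (Φ : MulAut X) {m : ℤ} (hm : m ≠ 0) :
    twistPeriod Φ m ≠ 0 :=
  mul_ne_zero (Int.natAbs_ne_zero.2 hm)
    (mul_ne_zero (orderOf_pos Φ).ne' Monoid.exponent_ne_zero_of_finite)

theorem zpow_eq_one_of_right_zpow_eq_one {Φ : MulAut X} {m : ℤ} (hm : m ≠ 0)
    {y : X ⋊[zmodHom Φ (twistPeriod Φ m) (pow_twistPeriod Φ m)]
      Multiplicative (ZMod (twistPeriod Φ m))}
    (hy : y.right = Multiplicative.ofAdd (m : ZMod (twistPeriod Φ m))) {i : ℤ}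
    (hi : (y ^ i).right = 1) : y ^ i = 1 := by
  set r := orderOf Φ
  set e := Monoid.exponent X
  have right_zpow (k : ℤ) : (y ^ k).right = y.right ^ k := map_zpow SemidirectProduct.rightHom y k
  have hdvd : ((r * e : ℕ) : ℤ) ∣ i := by
    rw [right_zpow, hy, ZMod.ofAdd_intCast_zpow_eq_one_iff, twistPeriod,
      ← Int.natAbs_dvd_natAbs, Int.natAbs_mul, Int.natAbs_natCast] at hi
    exact Int.natCast_dvd.2 (Nat.dvd_of_mul_dvd_mul_left (Int.natAbs_pos.2 hm) hi)
  have hpow : y ^ (r * e) = 1 := by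
    have hθ : zmodHom Φ _ (pow_twistPeriod Φ m) (y ^ r).right = 1 := by
      rw [← zpow_natCast, right_zpow, hy, ← ofAdd_zsmul, zsmul_eq_mul, ← Int.cast_mul,
        zmodHom_ofAdd_intCast, zpow_mul, zpow_natCast, pow_orderOf_eq_one, one_zpow]
    rw [pow_mul]
    refine SemidirectProduct.ext ?_ ?_
    · rw [SemidirectProduct.left_pow_of_map_right_eq_one hθ, Monoid.pow_exponent_eq_one]
      rfl
    · rw [← pow_mul, ← zpow_natCast, right_zpow, hy, SemidirectProduct.one_right,
        ZMod.ofAdd_intCast_zpow_eq_one_iff, twistPeriod, Nat.cast_mul]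
      exact mul_dvd_mul (Int.natAbs_dvd.2 dvd_rfl) dvd_rfl
  obtain ⟨k, rfl⟩ := hdvd
  rw [zpow_mul, zpow_natCast, hpow, one_zpow]

end MulAut

namespace FreeAb

variable {n : ℕ}

def reduceMod (n Q : ℕ) : FreeAb n →* Multiplicative (Fin n → ZMod Q) :=
  AddMonoidHom.toMultiplicative ((Int.castAddHom (ZMod Q)).compLeft (Fin n))

theorem reduceMod_eq_one_iff {Q : ℕ} {a : FreeAb n} :
    reduceMod n Q a = 1 ↔ ∀ i, (Q : ℤ) ∣ Multiplicative.toAdd a i := by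
  simp [reduceMod, funext_iff, ZMod.intCast_zmod_eq_zero_iff_dvd, ← toAdd_eq_zero]

noncomputable def endoMatrix (φ : FreeAb n →* FreeAb n) : Matrix (Fin n) (Fin n) ℤ :=
  LinearMap.toMatrix' (AddMonoidHom.toMultiplicative.symm φ).toIntLinearMap

theorem toAdd_apply_eq_endoMatrix_mulVec (φ : FreeAb n →* FreeAb n) (a : FreeAb n) :
    Multiplicative.toAdd (φ a) = endoMatrix φ *ᵥ Multiplicative.toAdd a :=
  (LinearMap.toMatrix'_mulVec (AddMonoidHom.toMultiplicative.symm φ).toIntLinearMap _).symm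

theorem det_endoMatrix_ne_zero {φ : FreeAb n →* FreeAb n} (hφ : Function.Injective φ) :
    (endoMatrix φ).det ≠ 0 := by
  intro hdet
  obtain ⟨v, hv, hφv⟩ := Matrix.exists_mulVec_eq_zero_iff.2 hdet
  refine hv (Multiplicative.ofAdd.injective (hφ ?_))
  apply Multiplicative.toAdd.injective
  rw [toAdd_apply_eq_endoMatrix_mulVec, toAdd_ofAdd, hφv, ofAdd_zero, map_one, toAdd_one]

theorem exists_mulAut_reduceMod_apply {φ : FreeAb n →* FreeAb n} {Q : ℕ} (hQ : Q.Prime)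
    (hdet : ¬ (Q : ℤ) ∣ (endoMatrix φ).det) :
    ∃ Φ : MulAut (Multiplicative (Fin n → ZMod Q)),
      ∀ a, reduceMod n Q (φ a) = Φ (reduceMod n Q a) := by
  have := Fact.mk hQ
  have hunit : IsUnit ((endoMatrix φ).map (Int.cast : ℤ → ZMod Q)).det := by
    have hcast : ((endoMatrix φ).map (Int.cast : ℤ → ZMod Q)).det =
        ((endoMatrix φ).det : ZMod Q) :=
      ((Int.castRingHom (ZMod Q)).map_det _).symm
    rw [hcast, isUnit_iff_ne_zero, Ne, ZMod.intCast_zmod_eq_zero_iff_dvd]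
    exact hdet
  let := Matrix.invertibleOfIsUnitDet _ hunit
  refine ⟨AddEquiv.toMultiplicative
    (Matrix.toLinearEquiv' ((endoMatrix φ).map (Int.cast : ℤ → ZMod Q)) this).toAddEquiv,
    fun a => ?_⟩
  apply Multiplicative.toAdd.injective
  ext i
  show ((Multiplicative.toAdd (φ a) i : ℤ) : ZMod Q) =
    ((endoMatrix φ).map Int.cast *ᵥ fun j => (Multiplicative.toAdd a j : ZMod Q)) i
  rw [toAdd_apply_eq_endoMatrix_mulVec]
  exact RingHom.map_mulVec (Int.castRingHom (ZMod Q)) _ _ i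

theorem exists_finite_equivariant_ne_one {φ : FreeAb n →* FreeAb n}
    (hφ : Function.Injective φ) {a : FreeAb n} (ha : a ≠ 1) :
    ∃ (X : Type) (_ : Group X) (_ : Finite X) (F : FreeAb n →* X) (Φ : MulAut X),
      (∀ b, F (φ b) = Φ (F b)) ∧ F a ≠ 1 := by
  obtain ⟨i, hi⟩ : ∃ i, Multiplicative.toAdd a i ≠ 0 := by
    by_contra! h
    exact ha (Multiplicative.toAdd.injective (funext h))
  set d := (endoMatrix φ).det * Multiplicative.toAdd a i
  have hd : d ≠ 0 := mul_ne_zero (det_endoMatrix_ne_zero hφ) hi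
  obtain ⟨Q, hdQ, hQ⟩ := Nat.exists_infinite_primes (d.natAbs + 1)
  have hQd : ¬ (Q : ℤ) ∣ d := fun h =>
    hd (Int.eq_zero_of_dvd_of_natAbs_lt_natAbs h (by rw [Int.natAbs_natCast]; omega))
  obtain ⟨Φ, hΦ⟩ := exists_mulAut_reduceMod_apply hQ fun h => hQd (dvd_mul_of_dvd_left h _)
  have := Fact.mk hQ
  exact ⟨_, _, inferInstance, reduceMod n Q, Φ, hΦ,
    fun h => hQd (dvd_mul_of_dvd_right (reduceMod_eq_one_iff.1 h i) _)⟩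

end FreeAb

namespace AscHNN

variable {n : ℕ} {φ : FreeAb n →* FreeAb n} {hφ : Function.Injective φ}

local notation "τ" => (HNNExtension.t : AscHNN φ hφ)
local notation "ι" => (HNNExtension.of : FreeAb n →* AscHNN φ hφ)

theorem t_mul_of (a : FreeAb n) : τ * ι a = ι (φ a) * τ :=
  HNNExtension.t_mul_of (φ := ascIso φ hφ) ⟨a, trivial⟩

theorem t_pow_mul_of (k : ℕ) (a : FreeAb n) : τ ^ k * ι a = ι (φ^[k] a) * τ ^ k := by
  induction k generalizing a with
  | zero => simp
  | succ k ih =>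
    rw [pow_succ, mul_assoc, t_mul_of, ← mul_assoc, ih, Function.iterate_succ_apply, mul_assoc]

theorem exists_eq_t_pow_inv_mul_of_mul_t_pow (x : AscHNN φ hφ) :
    ∃ (p q : ℕ) (a : FreeAb n), x = (τ ^ p)⁻¹ * ι a * τ ^ q := by
  have shift (k p q : ℕ) (a : FreeAb n) :
      (τ ^ p)⁻¹ * ι a * τ ^ q = (τ ^ (p + k))⁻¹ * ι (φ^[k] a) * τ ^ (q + k) := by
    have conj : ι (φ^[k] a) = τ ^ k * ι a * (τ ^ k)⁻¹ := by rw [t_pow_mul_of]; group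
    rw [conj, pow_add, pow_add]
    group
  induction x using HNNExtension.induction_on with
  | of a => exact ⟨0, 0, a, by simp⟩
  | t => exact ⟨0, 1, 1, by simp⟩
  | inv x ih =>
    obtain ⟨p, q, a, rfl⟩ := ih
    exact ⟨q, p, a⁻¹, by simp [mul_assoc]⟩
  | mul x y ihx ihy =>
    obtain ⟨p, q, a, rfl⟩ := ihx
    obtain ⟨p', q', b, rfl⟩ := ihy
    refine ⟨p + p', q + q', φ^[p'] a * φ^[q] b, ?_⟩
    rw [map_mul, shift p' p q a, shift q p' q' b, add_comm p' q]
    group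

noncomputable def tExp : AscHNN φ hφ →* Multiplicative ℤ :=
  HNNExtension.lift 1 (Multiplicative.ofAdd 1) fun _ => by simp

@[simp]
theorem tExp_of (a : FreeAb n) : tExp (ι a) = 1 := by simp [tExp]

@[simp]
theorem tExp_t : tExp τ = Multiplicative.ofAdd 1 := by simp [tExp]

theorem exists_eq_conj_of_tExp_eq_one {x : AscHNN φ hφ} (hx : tExp x = 1) :
    ∃ (p : ℕ) (a : FreeAb n), x = (τ ^ p)⁻¹ * ι a * τ ^ p := by
  obtain ⟨p, q, a, rfl⟩ := exists_eq_t_pow_inv_mul_of_mul_t_pow x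
  simp only [map_mul, map_inv, map_pow, tExp_of, tExp_t, mul_one, inv_mul_eq_one] at hx
  obtain rfl : p = q := by simpa [← ofAdd_nsmul] using hx
  exact ⟨p, a, rfl⟩

theorem toAdd_tExp_ne_zero {g : AscHNN φ hφ}
    (hg : ¬ ∃ x : AscHNN φ hφ, x * g * x⁻¹ ∈ (ι).range) : Multiplicative.toAdd (tExp g) ≠ 0 := by
  intro hg0
  obtain ⟨p, a, rfl⟩ := exists_eq_conj_of_tExp_eq_one (toAdd_eq_zero.1 hg0)
  exact hg ⟨τ ^ p, a, by group⟩

theorem exists_eq_zpow_mul_conj {g h : AscHNN φ hφ}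
    (hdvd : Multiplicative.toAdd (tExp g) ∣ Multiplicative.toAdd (tExp h))
    (hh : h ∉ zpowers g) :
    ∃ (j : ℤ) (p : ℕ) (a : FreeAb n), a ≠ 1 ∧ h = g ^ j * ((τ ^ p)⁻¹ * ι a * τ ^ p) := by
  obtain ⟨j, hj⟩ := hdvd
  have hu : tExp (g ^ (-j) * h) = 1 := by
    apply Multiplicative.toAdd.injective
    rw [map_mul, map_zpow, toAdd_mul, toAdd_zpow, hj, smul_eq_mul, toAdd_one]
    ring
  obtain ⟨p, a, hpa⟩ := exists_eq_conj_of_tExp_eq_one hu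
  refine ⟨j, p, a, ?_, by rw [← hpa]; group⟩
  rintro rfl
  exact hh ⟨j, by simpa [inv_mul_eq_one, eq_comm] using hpa⟩

noncomputable def tExpMod (M : ℕ) : AscHNN φ hφ →* Multiplicative (ZMod M) :=
  (Int.castAddHom (ZMod M)).toMultiplicative.comp tExp

theorem tExpMod_apply (M : ℕ) (x : AscHNN φ hφ) :
    tExpMod M x = Multiplicative.ofAdd ((Multiplicative.toAdd (tExp x) : ℤ) : ZMod M) := rfl

theorem tExpMod_notMem_zpowers {g h : AscHNN φ hφ}
    (hdvd : ¬ Multiplicative.toAdd (tExp g) ∣ Multiplicative.toAdd (tExp h)) :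
    tExpMod (Multiplicative.toAdd (tExp g)).natAbs h ∉
      zpowers (tExpMod (Multiplicative.toAdd (tExp g)).natAbs g) := by
  have hg : tExpMod (Multiplicative.toAdd (tExp g)).natAbs g = 1 := by
    rw [tExpMod_apply, ofAdd_eq_one, ZMod.intCast_zmod_eq_zero_iff_dvd, Int.natAbs_dvd]
  rw [hg, zpowers_one_eq_bot, mem_bot, tExpMod_apply, ofAdd_eq_one,
    ZMod.intCast_zmod_eq_zero_iff_dvd, Int.natAbs_dvd]
  exact hdvd

section Semidirect

variable {X : Type*} [Group X] {F : FreeAb n →* X} {Φ : MulAut X}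

noncomputable def toSemidirect (hF : ∀ a, F (φ a) = Φ (F a)) (M : ℕ) (hM : Φ ^ M = 1) :
    AscHNN φ hφ →* X ⋊[MulAut.zmodHom Φ M hM] Multiplicative (ZMod M) :=
  HNNExtension.lift (SemidirectProduct.inl.comp F)
    (SemidirectProduct.inr (Multiplicative.ofAdd 1)) fun a => by
      have hΦ : MulAut.zmodHom Φ M hM (Multiplicative.ofAdd 1) = Φ := by
        simpa using MulAut.zmodHom_ofAdd_intCast Φ M hM 1
      refine SemidirectProduct.ext ?_ ?_ <;> simp [hΦ, ← hF, ascIso, MonoidHom.ofInjective_apply]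

variable (hF : ∀ a, F (φ a) = Φ (F a)) (M : ℕ) (hM : Φ ^ M = 1)

@[simp]
theorem toSemidirect_of (a : FreeAb n) :
    toSemidirect hF M hM (ι a) = SemidirectProduct.inl (F a) :=
  HNNExtension.lift_of _ _ _ a

@[simp]
theorem toSemidirect_t :
    toSemidirect hF M hM τ = SemidirectProduct.inr (Multiplicative.ofAdd 1) :=
  HNNExtension.lift_t _ _ _

theorem right_toSemidirect (x : AscHNN φ hφ) : (toSemidirect hF M hM x).right = tExpMod M x := by
  have h : SemidirectProduct.rightHom.comp (toSemidirect hF M hM) =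
      (tExpMod M : AscHNN φ hφ →* _) :=
    HNNExtension.hom_ext (by ext; simp [tExpMod]) (by simp [tExpMod])
  exact DFunLike.congr_fun h x

theorem toSemidirect_zpow_mul_conj_notMem_zpowers {g : AscHNN φ hφ}
    (hg : Multiplicative.toAdd (tExp g) ≠ 0) (j : ℤ) (p : ℕ) {a : FreeAb n} (ha : F a ≠ 1) :
    toSemidirect hF _ (Φ.pow_twistPeriod (Multiplicative.toAdd (tExp g)))
        (g ^ j * ((τ ^ p)⁻¹ * ι a * τ ^ p)) ∉
      zpowers (toSemidirect hF _ (Φ.pow_twistPeriod (Multiplicative.toAdd (tExp g))) g) := by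
  set ρ := toSemidirect hF _ (Φ.pow_twistPeriod (Multiplicative.toAdd (tExp g)))
  intro hmem
  obtain ⟨i, hi⟩ := mem_zpowers_iff.1 hmem
  have hconj : ρ ((τ ^ p)⁻¹ * ι a * τ ^ p) = ρ g ^ (i - j) := by
    rw [sub_eq_neg_add, zpow_add, hi, map_mul ρ (g ^ j), map_zpow, zpow_neg,
      inv_mul_cancel_left]
  have hρg : (ρ g).right = Multiplicative.ofAdd ((Multiplicative.toAdd (tExp g) : ℤ) : ZMod _) :=
    right_toSemidirect hF _ _ g
  have hone : ρ g ^ (i - j) = 1 := by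
    refine MulAut.zpow_eq_one_of_right_zpow_eq_one hg hρg ?_
    rw [← hconj, right_toSemidirect, tExpMod_apply]
    simp
  rw [hone, map_mul, map_mul, mul_assoc, map_inv, inv_mul_eq_one, eq_comm, mul_eq_right,
    toSemidirect_of] at hconj
  exact ha (SemidirectProduct.inl_injective hconj)

end Semidirect

end AscHNN

open AscHNN in
theorem stmt_5_general (n : ℕ)
    (φ : FreeAb n →* FreeAb n) (hφ : Function.Injective φ)
    (g : AscHNN φ hφ)
    (hg : ¬ ∃ x : AscHNN φ hφ,
      x * g * x⁻¹ ∈ (HNNExtension.of : FreeAb n →* AscHNN φ hφ).range) :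
    ∀ h : AscHNN φ hφ, h ∉ Subgroup.zpowers g →
      ∃ N : Subgroup (AscHNN φ hφ), N.Normal ∧ N.FiniteIndex ∧
        h ∉ ((Subgroup.zpowers g : Set (AscHNN φ hφ)) * (N : Set (AscHNN φ hφ))) := by
  intro h hh
  have hm : Multiplicative.toAdd (tExp g) ≠ 0 := toAdd_tExp_ne_zero hg
  by_cases hdvd : Multiplicative.toAdd (tExp g) ∣ Multiplicative.toAdd (tExp h)
  · obtain ⟨j, p, a, ha, rfl⟩ := exists_eq_zpow_mul_conj hdvd hh
    obtain ⟨X, _, _, F, Φ, hF, hFa⟩ := FreeAb.exists_finite_equivariant_ne_one hφ ha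
    have : NeZero (Φ.twistPeriod (Multiplicative.toAdd (tExp g))) := ⟨Φ.twistPeriod_ne_zero hm⟩
    exact exists_normal_finiteIndex_notMem_zpowers_mul _
      (toSemidirect_zpow_mul_conj_notMem_zpowers hF hm j p hFa)
  · have : NeZero (Multiplicative.toAdd (tExp g)).natAbs := ⟨Int.natAbs_ne_zero.2 hm⟩
    exact exists_normal_finiteIndex_notMem_zpowers_mul _ (tExpMod_notMem_zpowers hdvd)

/-- Every cyclic subgroup of `G = A∗_φ` generated by an element `g`
with no conjugate in `A` is separable: for every `h ∉ ⟨g⟩` there is a finite-index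
normal subgroup `N` of `G` with `h ∉ ⟨g⟩·N`. -/
theorem stmt_5 (n : ℕ) (hn : 1 ≤ n)
    (φ : FreeAb n →* FreeAb n) (hφ : Function.Injective φ)
    (g : AscHNN φ hφ)
    (hg : ¬ ∃ x : AscHNN φ hφ,
      x * g * x⁻¹ ∈ (HNNExtension.of : FreeAb n →* AscHNN φ hφ).range) :
    ∀ h : AscHNN φ hφ, h ∉ Subgroup.zpowers g →
      ∃ N : Subgroup (AscHNN φ hφ), N.Normal ∧ N.FiniteIndex ∧
        h ∉ ((Subgroup.zpowers g : Set (AscHNN φ hφ)) * (N : Set (AscHNN φ hφ))) :=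
  stmt_5_general n φ hφ g hg
end

section
/- Let d = [A : φ(A)] be the index of φ(A) in A, and let m ≥ 1 be a natural number coprime to d. Then there exists a finite-index normal subgroup Ḡ of G with Ḡ ∩ A = mA, where mA = {m·a ∣ a ∈ A} (writing A additively). -/
open Subgroup

set_option linter.unusedSectionVars false
set_option linter.unusedVariables false

section Aux
variable {n m : ℕ} [NeZero m]

/-- coordinatewise reduction mod m -/
def redm (m : ℕ) (x : Fin n → ℤ) : Fin n → ZMod m := fun i => (x i : ZMod m)

lemma redm_add (x y : Fin n → ℤ) : redm m (x + y) = redm m x + redm m y := by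
  funext i; simp [redm]

lemma redm_sub (x y : Fin n → ℤ) : redm m (x - y) = redm m x - redm m y := by
  funext i; simp [redm]

lemma redm_zero_iff (x : Fin n → ℤ) : redm m x = 0 ↔ ∃ y, x = (m : ℤ) • y := by
  constructor
  · intro h
    refine ⟨fun i => x i / m, funext fun i => ?_⟩
    have := congrFun h i
    simp only [redm, Pi.zero_apply, ZMod.intCast_zmod_eq_zero_iff_dvd] at this
    simp [Pi.smul_apply, zsmul_eq_mul, Int.mul_ediv_cancel' this]
  · rintro ⟨y, rfl⟩
    funext i
    simp [redm, Pi.smul_apply, zsmul_eq_mul]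

lemma redm_val (v : Fin n → ZMod m) : redm m (fun i => ((v i).val : ℤ)) = v := by
  funext i; simp [redm, ZMod.natCast_val, ZMod.intCast_cast, ZMod.cast_id]

end Aux

section Aux2
variable {n : ℕ} (m : ℕ) [NeZero m] (φ : FreeAb n →* FreeAb n)

/-- the endomorphism `φ` written additively -/
def phiAdd : (Fin n → ℤ) → (Fin n → ℤ) :=
  fun x => Multiplicative.toAdd (φ (Multiplicative.ofAdd x))

lemma phiAdd_add (x y : Fin n → ℤ) : phiAdd φ (x + y) = phiAdd φ x + phiAdd φ y := by
  simp [phiAdd, ofAdd_add, map_mul]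

lemma phiAdd_zsmul (c : ℤ) (x : Fin n → ℤ) : phiAdd φ (c • x) = c • phiAdd φ x := by
  unfold phiAdd
  rw [ofAdd_zsmul, map_zpow, toAdd_zpow]

lemma redm_phiAdd_congr {x y : Fin n → ℤ} (h : redm m x = redm m y) :
    redm m (phiAdd φ x) = redm m (phiAdd φ y) := by
  have h0 : redm m (x - y) = 0 := by rw [redm_sub, h, sub_self]
  obtain ⟨z, hz⟩ := (redm_zero_iff _).1 h0
  have hx : x = y + (m : ℤ) • z := by rw [← hz]; ring
  rw [hx, phiAdd_add, redm_add, phiAdd_zsmul,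
    (redm_zero_iff _).2 ⟨phiAdd φ z, rfl⟩, add_zero]

end Aux2

section Aux3
variable {n : ℕ} (m : ℕ) [NeZero m] (φ : FreeAb n →* FreeAb n)

/-- the map induced by `φ` modulo `m` -/
def phibar : (Fin n → ZMod m) → (Fin n → ZMod m) :=
  fun v => redm m (phiAdd φ (fun i => ((v i).val : ℤ)))

lemma phibar_redm (x : Fin n → ℤ) : phibar m φ (redm m x) = redm m (phiAdd φ x) := by
  apply redm_phiAdd_congr
  exact redm_val _

lemma phibar_add (u v : Fin n → ZMod m) :
    phibar m φ (u + v) = phibar m φ u + phibar m φ v := by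
  have hu := redm_val (m := m) u
  have hv := redm_val (m := m) v
  rw [← hu, ← hv, ← redm_add, phibar_redm, phibar_redm, phibar_redm, phiAdd_add, redm_add]

lemma phibar_surj (hcop : Nat.Coprime m φ.range.index) :
    Function.Surjective (phibar m φ) := by
  intro v
  set x : Fin n → ℤ := fun i => ((v i).val : ℤ) with hxdef
  have hv : redm m x = v := redm_val v
  have hcop' : IsCoprime (m : ℤ) (φ.range.index : ℤ) := by
    rw [Int.isCoprime_iff_gcd_eq_one]
    exact_mod_cast hcop
  obtain ⟨u, w, huw⟩ := hcop'
  have hmem : (Multiplicative.ofAdd x) ^ φ.range.index ∈ φ.range :=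
    Subgroup.pow_index_mem _ _
  obtain ⟨b, hb⟩ := hmem
  have hdx : phiAdd φ (Multiplicative.toAdd b) = (φ.range.index : ℤ) • x := by
    have hb' : φ (Multiplicative.ofAdd (Multiplicative.toAdd b)) =
        Multiplicative.ofAdd x ^ φ.range.index := by simpa using hb
    unfold phiAdd
    rw [hb', toAdd_pow, natCast_zsmul]
    simp
  refine ⟨redm m (w • Multiplicative.toAdd b), ?_⟩
  rw [phibar_redm, phiAdd_zsmul, hdx, smul_smul, ← hv]
  have h2 : redm m (x - (w * (φ.range.index : ℤ)) • x) = 0 := by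
    refine (redm_zero_iff _).2 ⟨u • x, ?_⟩
    have : x - (w * (φ.range.index : ℤ)) • x = ((1 : ℤ) - w * (φ.range.index : ℤ)) • x := by
      rw [sub_smul, one_smul]
    rw [this, smul_smul]
    congr 1
    linarith
  rw [redm_sub] at h2
  exact (sub_eq_zero.mp h2).symm


/-- translation action of `A` on `(ZMod m)^n` -/
def rhoHom (n m : ℕ) : FreeAb n →* Equiv.Perm (Fin n → ZMod m) :=
  MonoidHom.mk' (fun a => Equiv.addLeft (redm m (Multiplicative.toAdd a)))
    (by
      intro a b
      ext v
      simp [Equiv.Perm.mul_apply, redm, add_assoc])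

lemma rhoHom_eq_one_iff (a : FreeAb n) :
    rhoHom n m a = 1 ↔ redm m (Multiplicative.toAdd a) = 0 := by
  constructor
  · intro h
    have := congrFun (congrArg (fun (e : Equiv.Perm (Fin n → ZMod m)) => (e : (Fin n → ZMod m) → (Fin n → ZMod m))) h) 0
    simpa [rhoHom] using this
  · intro h
    ext v
    simp [rhoHom, h]

end Aux3

/-- Let `d = [A : φ(A)]` and let `m ≥ 1` be coprime to `d`.  Then
there is a finite-index normal subgroup `Gbar` of `G = A∗_φ` with `Gbar ∩ A = mA`
(multiplicatively, `mA` is the subgroup of `m`-th powers `{a^m ∣ a ∈ A}`). -/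
theorem stmt_7 (n : ℕ) (hn : 1 ≤ n)
    (φ : FreeAb n →* FreeAb n) (hφ : Function.Injective φ)
    (m : ℕ) (hm : 1 ≤ m) (hcop : Nat.Coprime m φ.range.index) :
    ∃ Gbar : Subgroup (AscHNN φ hφ), Gbar.Normal ∧ Gbar.FiniteIndex ∧
      Subgroup.comap (HNNExtension.of : FreeAb n →* AscHNN φ hφ) Gbar =
        Subgroup.map (powMonoidHom m : FreeAb n →* FreeAb n) ⊤ := by
  have : NeZero m := ⟨by omega⟩
  have hbij : Function.Bijective (phibar m φ) :=
    Finite.surjective_iff_bijective.mp (phibar_surj m φ hcop)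
  set τ : Equiv.Perm (Fin n → ZMod m) := Equiv.ofBijective _ hbij with hτ
  have hx : ∀ a : (⊤ : Subgroup (FreeAb n)),
      τ * rhoHom n m ↑a = rhoHom n m ((ascIso φ hφ a : φ.range) : FreeAb n) * τ := by
    intro a
    have hcoe : ((ascIso φ hφ a : φ.range) : FreeAb n) = φ ↑a := by
      simp [ascIso, MonoidHom.ofInjective_apply]
    rw [hcoe]
    apply Equiv.ext
    intro v
    rw [Equiv.Perm.mul_apply, Equiv.Perm.mul_apply]
    have h1 : ∀ g : FreeAb n, ∀ w, rhoHom n m g w = redm m (Multiplicative.toAdd g) + w := by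
      intro g w; rfl
    rw [h1, h1]
    show phibar m φ _ = _
    rw [phibar_add, phibar_redm]
    simp [phiAdd, hτ]
  set Φ : AscHNN φ hφ →* Equiv.Perm (Fin n → ZMod m) := HNNExtension.lift (rhoHom n m) τ hx with hΦ
  refine ⟨Φ.ker, inferInstance, inferInstance, ?_⟩
  ext a
  simp only [Subgroup.mem_comap, MonoidHom.mem_ker, Subgroup.mem_map, Subgroup.mem_top,
    true_and, powMonoidHom_apply, hΦ, HNNExtension.lift_of]
  rw [rhoHom_eq_one_iff, redm_zero_iff]
  constructor
  · rintro ⟨y, hy⟩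
    refine ⟨Multiplicative.ofAdd y, ?_⟩
    apply Multiplicative.toAdd.injective
    rw [toAdd_pow, hy]
    simp [natCast_zsmul]
  · rintro ⟨b, rfl⟩
    exact ⟨Multiplicative.toAdd b, by rw [toAdd_pow, natCast_zsmul]⟩
end

section
/- Let g₁, g₂ ∈ A be nontrivial elements with ⟨g₁⟩ ∩ ⟨g₂⟩ = {1}. Then ⟨g₁⟩ is separable from g₂ in G: there exists a finite-index normal subgroup Ḡ of G with g₂ ∉ ⟨g₁⟩·Ḡ. -/
/-!
The ascending HNN extension acts on `(ℤ/p)ⁿ` by affine maps: `a ∈ A` acts as translation by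
`a mod p` and the stable letter `t` as the reduction mod `p` of the matrix of `φ`. This is an
action by permutations as soon as `p` does not divide `det φ`, and the relation
`t a t⁻¹ = φ(a)` holds because `t` conjugates translation by `v` into translation by `φ v`.
Since `⟨g₁⟩ ∩ ⟨g₂⟩ = 1`, the vectors `g₁, g₂ ∈ ℤⁿ` are linearly independent, so some
`2 × 2` minor `c` of `(g₁ g₂)` is nonzero. Choosing `p ∤ c · det φ`, the reductions of `g₁`
and `g₂` stay independent mod `p`, so the translation by `g₂` is not a power of the
translation by `g₁`, and the kernel of the action is the required finite-index normal subgroup.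
-/

open Subgroup Pointwise

open Matrix

section DisjointCyclic

variable {ι : Type*}

theorem exists_minor_ne_zero_of_zpowers_inf_eq_bot {g₁ g₂ : Multiplicative (ι → ℤ)}
    (hg₁ : g₁ ≠ 1) (hg₂ : g₂ ≠ 1) (hdisj : zpowers g₁ ⊓ zpowers g₂ = ⊥) :
    ∃ i j, g₁.toAdd i * g₂.toAdd j - g₁.toAdd j * g₂.toAdd i ≠ 0 := by
  by_contra! hminor
  obtain ⟨i, hi⟩ := Function.ne_iff.1 (mt toAdd_eq_zero.1 hg₁)
  have hpow : g₂ ^ g₁.toAdd i = g₁ ^ g₂.toAdd i := by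
    ext j
    simp only [toAdd_zpow, Pi.smul_apply, smul_eq_mul]
    linarith [hminor i j]
  have hmem : g₂ ^ g₁.toAdd i ∈ zpowers g₁ ⊓ zpowers g₂ :=
    ⟨⟨g₂.toAdd i, hpow.symm⟩, ⟨g₁.toAdd i, rfl⟩⟩
  rw [hdisj, mem_bot, ← toAdd_eq_zero, toAdd_zpow, smul_eq_zero, toAdd_eq_zero] at hmem
  exact hmem.elim hi hg₂

theorem intCast_minor_eq_zero {R : Type*} [CommRing R] {a b : ι → ℤ} {k : R}
    (h : ∀ l, (b l : R) = k * a l) (i j : ι) : ((a i * b j - a j * b i : ℤ) : R) = 0 := by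
  push_cast
  rw [h i, h j]
  ring

end DisjointCyclic

theorem exists_prime_intCast_ne_zero {m : ℤ} (hm : m ≠ 0) :
    ∃ p : ℕ, p.Prime ∧ (m : ZMod p) ≠ 0 := by
  obtain ⟨p, hle, hp⟩ := Nat.exists_infinite_primes (m.natAbs + 1)
  refine ⟨p, hp, fun hdvd => ?_⟩
  rw [ZMod.intCast_zmod_eq_zero_iff_dvd, Int.natCast_dvd] at hdvd
  have := Nat.le_of_dvd (Int.natAbs_pos.2 hm) hdvd
  omega

theorem notMem_zpowers_mul_ker {G H : Type*} [Group G] [Group H] (f : G →* H) {x y : G}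
    (h : f y ∉ zpowers (f x)) : y ∉ (zpowers x : Set G) * (f.ker : Set G) := by
  rintro ⟨_, ⟨k, rfl⟩, z, hz, rfl⟩
  exact h ⟨k, by simp [(MonoidHom.mem_ker).1 hz]⟩

namespace FreeAb

variable {n : ℕ}

def endMatrix (φ : FreeAb n →* FreeAb n) : Matrix (Fin n) (Fin n) ℤ :=
  LinearMap.toMatrix' (AddMonoidHom.toMultiplicative.symm φ).toIntLinearMap

theorem toAdd_map_eq_mulVec (φ : FreeAb n →* FreeAb n) (g : FreeAb n) :
    (φ g).toAdd = endMatrix φ *ᵥ g.toAdd := by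
  rw [endMatrix, ← Matrix.toLin'_apply, Matrix.toLin'_toMatrix']
  rfl

theorem det_endMatrix_ne_zero {φ : FreeAb n →* FreeAb n} (hφ : Function.Injective φ) :
    (endMatrix φ).det ≠ 0 := by
  intro h0
  obtain ⟨v, hv, hMv⟩ := Matrix.exists_mulVec_eq_zero_iff.2 h0
  refine hv (ofAdd_eq_one.1 ((hφ.eq_iff' (map_one φ)).1 ?_))
  rw [← toAdd_eq_zero, toAdd_map_eq_mulVec]
  exact hMv

variable (p : ℕ)

def translationRep : FreeAb n →* Equiv.Perm (Fin n → ZMod p) :=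
  AddMonoidHom.toMultiplicativeLeft
    ((AddAction.toPermHom _ _).comp ((Int.castAddHom (ZMod p)).compLeft (Fin n)))

theorem translationRep_apply (g : FreeAb n) (x : Fin n → ZMod p) :
    translationRep p g x = Int.cast ∘ g.toAdd + x := rfl

variable {p} {φ : FreeAb n →* FreeAb n} (hφ : Function.Injective φ)
  (hdet : IsUnit ((endMatrix φ).det : ZMod p))

noncomputable def reducedEndPerm : Equiv.Perm (Fin n → ZMod p) :=
  ((endMatrix φ).map (Int.cast : ℤ → ZMod p)).toLinearEquiv'
    (invertibleOfIsUnitDet _ (by rwa [← Int.cast_det])) |>.toEquiv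

theorem reducedEndPerm_apply (x : Fin n → ZMod p) :
    reducedEndPerm hdet x = (endMatrix φ).map (Int.cast : ℤ → ZMod p) *ᵥ x := rfl

theorem reducedEndPerm_mul_translationRep (a : FreeAb n) :
    reducedEndPerm hdet * translationRep p a = translationRep p (φ a) * reducedEndPerm hdet := by
  ext x i
  simp only [Equiv.Perm.mul_apply, translationRep_apply, reducedEndPerm_apply, mulVec_add,
    toAdd_map_eq_mulVec, Pi.add_apply, Function.comp_apply, add_left_inj]
  exact (RingHom.map_mulVec (Int.castRingHom (ZMod p)) _ _ i).symm

noncomputable def modRep : AscHNN φ hφ →* Equiv.Perm (Fin n → ZMod p) :=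
  HNNExtension.lift (translationRep p) (reducedEndPerm hdet)
    fun a => reducedEndPerm_mul_translationRep hdet a

theorem modRep_of (g : FreeAb n) : modRep hφ hdet (HNNExtension.of g) = translationRep p g :=
  HNNExtension.lift_of ..

theorem exists_intCast_eq_mul_of_translationRep_mem_zpowers {g₁ g₂ : FreeAb n}
    (h : translationRep p g₂ ∈ zpowers (translationRep p g₁)) :
    ∃ k : ℤ, ∀ l, (g₂.toAdd l : ZMod p) = k * g₁.toAdd l := by
  obtain ⟨k, hk⟩ := mem_zpowers_iff.1 h
  refine ⟨k, fun l => ?_⟩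
  rw [← map_zpow] at hk
  have hk0 := congrFun (Equiv.congr_fun hk 0) l
  rw [translationRep_apply, translationRep_apply] at hk0
  simpa [toAdd_zpow] using hk0.symm

end FreeAb

theorem stmt_8_general (n : ℕ)
    (φ : FreeAb n →* FreeAb n) (hφ : Function.Injective φ)
    (g₁ g₂ : FreeAb n) (hg₁ : g₁ ≠ 1) (hg₂ : g₂ ≠ 1)
    (hdisj : Subgroup.zpowers g₁ ⊓ Subgroup.zpowers g₂ = ⊥) :
    ∃ Gbar : Subgroup (AscHNN φ hφ), Gbar.Normal ∧ Gbar.FiniteIndex ∧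
      (HNNExtension.of g₂ : AscHNN φ hφ) ∉
        ((Subgroup.zpowers (HNNExtension.of g₁ : AscHNN φ hφ) : Set (AscHNN φ hφ)) *
          (Gbar : Set (AscHNN φ hφ))) := by
  obtain ⟨i, j, hminor⟩ := exists_minor_ne_zero_of_zpowers_inf_eq_bot hg₁ hg₂ hdisj
  obtain ⟨p, hp, hpd⟩ :=
    exists_prime_intCast_ne_zero (mul_ne_zero (FreeAb.det_endMatrix_ne_zero hφ) hminor)
  have : Fact p.Prime := ⟨hp⟩
  rw [Int.cast_mul, mul_ne_zero_iff] at hpd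
  refine ⟨(FreeAb.modRep hφ (isUnit_iff_ne_zero.2 hpd.1)).ker, inferInstance, inferInstance,
    notMem_zpowers_mul_ker _ fun hmem => ?_⟩
  rw [FreeAb.modRep_of, FreeAb.modRep_of] at hmem
  obtain ⟨k, hk⟩ := FreeAb.exists_intCast_eq_mul_of_translationRep_mem_zpowers hmem
  exact hpd.2 (intCast_minor_eq_zero hk i j)

/-- Let `g₁, g₂ ∈ A` be nontrivial with `⟨g₁⟩ ∩ ⟨g₂⟩ = {1}`.  Then
`⟨g₁⟩` is separable from `g₂` in `G = A∗_φ`: there is a finite-index normal subgroup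
`Gbar` of `G` with `g₂ ∉ ⟨g₁⟩·Gbar`. -/
theorem stmt_8 (n : ℕ) (hn : 1 ≤ n)
    (φ : FreeAb n →* FreeAb n) (hφ : Function.Injective φ)
    (g₁ g₂ : FreeAb n) (hg₁ : g₁ ≠ 1) (hg₂ : g₂ ≠ 1)
    (hdisj : Subgroup.zpowers g₁ ⊓ Subgroup.zpowers g₂ = ⊥) :
    ∃ Gbar : Subgroup (AscHNN φ hφ), Gbar.Normal ∧ Gbar.FiniteIndex ∧
      (HNNExtension.of g₂ : AscHNN φ hφ) ∉
        ((Subgroup.zpowers (HNNExtension.of g₁ : AscHNN φ hφ) : Set (AscHNN φ hφ)) *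
          (Gbar : Set (AscHNN φ hφ))) :=
  stmt_8_general n φ hφ g₁ g₂ hg₁ hg₂ hdisj
end

section
/- Let H be a cyclic subgroup separable group, let h ∈ H be an element of infinite order, and let m ≥ 1 be a natural number. Then there exists a finite-index normal subgroup H̄ of H such that the order of the image of h in the finite quotient H/H̄ is a multiple of m. -/
open Subgroup Pointwise

lemma aux_pow_notmem (H : Type*) [Group H] (h : H) (hh : ¬ IsOfFinOrder h)
    {m i : ℕ} (hi0 : 0 < i) (him : i < m) : h ^ i ∉ Subgroup.zpowers (h ^ m) := by
  rintro ⟨j, hj⟩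
  have hinj : Function.Injective fun n : ℤ => h ^ n := by
    rwa [injective_zpow_iff_not_isOfFinOrder]
  have : (m : ℤ) * j = i := by
    apply hinj
    simpa [zpow_mul, ← zpow_natCast] using hj
  have hmd : (m : ℤ) ∣ (i : ℤ) := ⟨j, this.symm⟩
  have := Int.le_of_dvd (by exact_mod_cast hi0) hmd
  omega

/-- If `H` is a cyclic subgroup separable group, `h ∈ H` has infinite
order, and `m ≥ 1`, then there is a finite-index normal subgroup `Hbar` of `H` such that
the order of the image of `h` in the finite quotient `H/Hbar` is a multiple of `m`. -/
theorem stmt_9 (H : Type*) [Group H]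
    (hcss : ∀ x : H, ∀ g : H, g ∉ Subgroup.zpowers x →
      ∃ N : Subgroup H, N.Normal ∧ N.FiniteIndex ∧
        g ∉ ((Subgroup.zpowers x : Set H) * (N : Set H)))
    (h : H) (hh : ¬ IsOfFinOrder h) (m : ℕ) (hm : 1 ≤ m) :
    ∃ Hbar : Subgroup H, ∃ hnorm : Hbar.Normal, Hbar.FiniteIndex ∧
      m ∣ (letI := hnorm; orderOf (QuotientGroup.mk h : H ⧸ Hbar)) := by
  -- choose separating subgroups
  have hsep : ∀ i : ℕ, 0 < i → i < m → ∃ N : Subgroup H, N.Normal ∧ N.FiniteIndex ∧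
      h ^ i ∉ ((Subgroup.zpowers (h ^ m) : Set H) * (N : Set H)) := fun i hi0 him =>
    hcss (h ^ m) (h ^ i) (aux_pow_notmem H h hh hi0 him)
  classical
  choose! N hNnorm hNfin hNsep using hsep
  set s : Finset ℕ := Finset.Ioo 0 m with hs
  have hnormal : (⨅ i ∈ s, N i).Normal := by
    constructor
    intro n hn g
    simp only [Subgroup.mem_iInf] at hn ⊢
    intro i hi
    have hi' : (0:ℕ) < i ∧ i < m := by simpa [hs] using hi
    exact (hNnorm i hi'.1 hi'.2).conj_mem n (hn i hi) g
  have hfin : (⨅ i ∈ s, N i).FiniteIndex := Subgroup.finiteIndex_iInf' _ fun i hi => by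
    have hi' : (0:ℕ) < i ∧ i < m := by simpa [hs] using hi
    exact hNfin i hi'.1 hi'.2
  refine ⟨⨅ i ∈ s, N i, hnormal, hfin, ?_⟩
  set Hbar : Subgroup H := ⨅ i ∈ s, N i with hHbar
  haveI := hnormal
  haveI := hfin
  set k := orderOf (QuotientGroup.mk h : H ⧸ Hbar) with hk
  have hk0 : 0 < k := by
    haveI : Finite (H ⧸ Hbar) := Hbar.finite_quotient_of_finiteIndex
    exact (isOfFinOrder_of_finite _).orderOf_pos
  set π : H →* H ⧸ Hbar := QuotientGroup.mk' Hbar with hπ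
  set Kbar : Subgroup (H ⧸ Hbar) := (Subgroup.zpowers (h ^ m)).map π with hKbar
  have hmmem : (QuotientGroup.mk h : H ⧸ Hbar) ^ m ∈ Kbar := by
    refine ⟨h ^ m, Subgroup.mem_zpowers _, ?_⟩
    simp [hπ]
  have hkmem : (QuotientGroup.mk h : H ⧸ Hbar) ^ k ∈ Kbar := by
    rw [hk, pow_orderOf_eq_one]
    exact Kbar.one_mem
  have hrmem : (QuotientGroup.mk h : H ⧸ Hbar) ^ (k % m) ∈ Kbar := by
    have hmad := Nat.mod_add_div k m
    have hle : m * (k / m) ≤ k := by omega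
    have heq : (QuotientGroup.mk h : H ⧸ Hbar) ^ (k % m) =
        ((QuotientGroup.mk h : H ⧸ Hbar) ^ k) *
          (((QuotientGroup.mk h : H ⧸ Hbar) ^ m) ^ (k / m))⁻¹ := by
      rw [← pow_mul, ← pow_sub _ hle]
      congr 1
      omega
    rw [heq]
    exact Kbar.mul_mem hkmem (Kbar.inv_mem (Kbar.pow_mem hmmem _))
  by_contra hdvd
  have hr0 : 0 < k % m := Nat.pos_of_ne_zero fun hz => hdvd (Nat.dvd_of_mod_eq_zero hz)
  have hrm : k % m < m := Nat.mod_lt _ (by omega)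
  obtain ⟨y, hy, hyeq⟩ := hrmem
  have hmem : h ^ (k % m) ∈ ((Subgroup.zpowers (h ^ m) : Set H) * (N (k % m) : Set H)) := by
    have hthis : π y = π (h ^ (k % m)) := by simpa [hπ] using hyeq
    simp only [hπ, QuotientGroup.mk'_apply] at hthis
    rw [QuotientGroup.eq] at hthis
    have hdiffN : y⁻¹ * h ^ (k % m) ∈ N (k % m) := by
      rw [hHbar] at hthis
      simp only [Subgroup.mem_iInf] at hthis
      exact hthis (k % m) (by simp [hs]; omega)
    exact ⟨y, hy, y⁻¹ * h ^ (k % m), hdiffN, by group⟩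
  exact hNsep (k % m) hr0 hrm hmem
end

section
/- Suppose there exist λ ∈ ℤ with |λ| > 1 and a nontrivial a ∈ A with φ(a) = λ·a (writing A additively). Then ⟨λ·a⟩ is not separable from a in G: for every finite-index normal subgroup Ḡ of G one has a ∈ ⟨λ·a⟩·Ḡ. In particular, G is not cyclic subgroup separable. -/
open Subgroup Pointwise

/-!
If `φ(a) = a^λ`, then `a` and `a^λ` are conjugate in `G` (by the stable letter `t`), hence
also in every finite quotient `G/N`. In a finite group, conjugate elements have the same
order, so the subgroup `⟨a^λ⟩ ≤ ⟨a⟩` is all of `⟨a⟩`, i.e. `a ∈ ⟨a^λ⟩N`. On the other hand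
`a` has infinite order in `G`, so `a ∈ ⟨a^λ⟩` would force `λ = ±1`.
-/

section ZPowers

variable {G : Type*} [Group G]

lemma mem_zpowers_zpow_of_isConj {x : G} {k : ℤ} (hx : IsOfFinOrder x)
    (hconj : IsConj x (x ^ k)) : x ∈ zpowers (x ^ k) := by
  have : Finite (zpowers x) := (finite_zpowers.2 hx).to_subtype
  have hle : zpowers (x ^ k) ≤ zpowers x := zpowers_le.2 (zpow_mem_zpowers x k)
  have hcard : Nat.card (zpowers x) ≤ Nat.card (zpowers (x ^ k)) := by
    obtain ⟨c, hc⟩ := hconj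
    rw [Nat.card_zpowers, Nat.card_zpowers, hc.orderOf_eq]
  exact eq_of_le_of_card_ge hle hcard ▸ mem_zpowers x

lemma mem_zpowers_zpow_mul_of_isConj {x : G} {k : ℤ} (hconj : IsConj x (x ^ k))
    (N : Subgroup G) [N.Normal] [N.FiniteIndex] :
    x ∈ (zpowers (x ^ k) : Set G) * N := by
  have hquot : QuotientGroup.mk' N x ∈ (zpowers (x ^ k)).map (QuotientGroup.mk' N) := by
    rw [MonoidHom.map_zpowers, map_zpow]
    refine mem_zpowers_zpow_of_isConj (isOfFinOrder_of_finite _) ?_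
    simpa only [map_zpow] using (QuotientGroup.mk' N).map_isConj hconj
  rw [← mem_comap, QuotientGroup.comap_map_mk', sup_comm] at hquot
  rwa [← mul_normal]

lemma notMem_zpowers_zpow {x : G} {k : ℤ} (hx : ¬IsOfFinOrder x) (hk : 1 < |k|) :
    x ∉ zpowers (x ^ k) := by
  rw [mem_zpowers_zpow_iff, orderOf_eq_zero hx]
  simp only [Nat.cast_zero, Int.gcd_zero_right]
  rw [Int.abs_eq_natAbs] at hk
  omega

end ZPowers

namespace AscHNN

variable {n : ℕ} {φ : FreeAb n →* FreeAb n} {hφ : Function.Injective φ}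

lemma isConj_of_of_apply (b : FreeAb n) :
    IsConj (HNNExtension.of b : AscHNN φ hφ) (HNNExtension.of (φ b)) :=
  isConj_iff.2 ⟨HNNExtension.t, (HNNExtension.equiv_eq_conj (φ := ascIso φ hφ) ⟨b, trivial⟩).symm⟩

lemma not_isOfFinOrder_of {b : FreeAb n} (hb : b ≠ 1) :
    ¬IsOfFinOrder (HNNExtension.of b : AscHNN φ hφ) := by
  rw [(HNNExtension.of_injective (φ := ascIso φ hφ)).isOfFinOrder_iff]
  exact not_isOfFinOrder_of_isMulTorsionFree hb

end AscHNN

theorem stmt_11_general (n : ℕ)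
    (φ : FreeAb n →* FreeAb n) (hφ : Function.Injective φ)
    (lam : ℤ) (hlam : 1 < |lam|) (a : FreeAb n) (ha : a ≠ 1)
    (heig : φ a = a ^ lam) :
    (∀ Gbar : Subgroup (AscHNN φ hφ), Gbar.Normal → Gbar.FiniteIndex →
      (HNNExtension.of a : AscHNN φ hφ) ∈
        ((Subgroup.zpowers (HNNExtension.of (a ^ lam) : AscHNN φ hφ) :
            Set (AscHNN φ hφ)) * (Gbar : Set (AscHNN φ hφ)))) ∧
    ¬ (∀ g h : AscHNN φ hφ, h ∉ Subgroup.zpowers g →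
        ∃ N : Subgroup (AscHNN φ hφ), N.Normal ∧ N.FiniteIndex ∧
          h ∉ ((Subgroup.zpowers g : Set (AscHNN φ hφ)) * (N : Set (AscHNN φ hφ)))) := by
  have hconj : IsConj (HNNExtension.of a : AscHNN φ hφ) (HNNExtension.of a ^ lam) := by
    simpa only [heig, map_zpow] using AscHNN.isConj_of_of_apply (hφ := hφ) a
  have hclose : ∀ Gbar : Subgroup (AscHNN φ hφ), Gbar.Normal → Gbar.FiniteIndex →
      (HNNExtension.of a : AscHNN φ hφ) ∈
        ((zpowers (HNNExtension.of (a ^ lam) : AscHNN φ hφ) : Set (AscHNN φ hφ)) * Gbar) := by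
    intro Gbar _ _
    rw [map_zpow]
    exact mem_zpowers_zpow_mul_of_isConj hconj Gbar
  refine ⟨hclose, fun hsep => ?_⟩
  have hnot : (HNNExtension.of a : AscHNN φ hφ) ∉ zpowers (HNNExtension.of (a ^ lam)) := by
    rw [map_zpow]
    exact notMem_zpowers_zpow (AscHNN.not_isOfFinOrder_of ha) hlam
  obtain ⟨N, hN, hfin, hsepN⟩ := hsep _ _ hnot
  exact hsepN (hclose N hN hfin)

/-- If `φ` has an integer eigenvalue `λ` with `|λ| > 1` and
eigenvector `a ≠ 1` (i.e. `φ(a) = a^λ` multiplicatively), then `⟨λ·a⟩ = ⟨a^λ⟩` is not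
separable from `a` in `G = A∗_φ`: `a ∈ ⟨a^λ⟩·Gbar` for every finite-index normal
subgroup `Gbar` of `G`.  In particular, `G` is not cyclic subgroup separable. -/
theorem stmt_11 (n : ℕ) (hn : 1 ≤ n)
    (φ : FreeAb n →* FreeAb n) (hφ : Function.Injective φ)
    (lam : ℤ) (hlam : 1 < |lam|) (a : FreeAb n) (ha : a ≠ 1)
    (heig : φ a = a ^ lam) :
    (∀ Gbar : Subgroup (AscHNN φ hφ), Gbar.Normal → Gbar.FiniteIndex →
      (HNNExtension.of a : AscHNN φ hφ) ∈
        ((Subgroup.zpowers (HNNExtension.of (a ^ lam) : AscHNN φ hφ) :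
            Set (AscHNN φ hφ)) * (Gbar : Set (AscHNN φ hφ)))) ∧
    ¬ (∀ g h : AscHNN φ hφ, h ∉ Subgroup.zpowers g →
        ∃ N : Subgroup (AscHNN φ hφ), N.Normal ∧ N.FiniteIndex ∧
          h ∉ ((Subgroup.zpowers g : Set (AscHNN φ hφ)) * (N : Set (AscHNN φ hφ)))) :=
  stmt_11_general n φ hφ lam hlam a ha heig
end

section
/- Let F be a field, V a nontrivial finite-dimensional F-vector space, and α : V → V an F-linear map. Then the characteristic polynomial of α is irreducible in F[X] if and only if there is no α-invariant subspace W of V with W ≠ 0 and W ≠ V (a subspace W is α-invariant if α(W) ⊆ W). -/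
open Polynomial

section Aux

variable {F V : Type*} [Field F] [AddCommGroup V] [Module F V]
  [FiniteDimensional F V] (α : V →ₗ[F] V)

/-- `aeval α p` commutes with `α`. -/
lemma aux_aeval_comm (p : F[X]) (x : V) :
    (aeval α p) (α x) = α ((aeval α p) x) := by
  have h : aeval α p * α = α * aeval α p := by
    have hX : aeval α (X : F[X]) = α := aeval_X α
    calc aeval α p * α = aeval α (p * X) := by rw [map_mul, hX]
      _ = aeval α (X * p) := by rw [mul_comm]
      _ = α * aeval α p := by rw [map_mul, hX]
  have := congrArg (fun f : V →ₗ[F] V => f x) h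
  simpa [Module.End.mul_apply] using this

/-- The annihilator ideal of a vector `v` under `α`. -/
def annIdeal (v : V) : Ideal F[X] where
  carrier := {q | (aeval α q) v = 0}
  add_mem' := by
    intro a b ha hb
    simp only [Set.mem_setOf_eq, map_add, LinearMap.add_apply] at *
    rw [ha, hb, add_zero]
  zero_mem' := by simp
  smul_mem' := by
    intro p q hq
    simp only [Set.mem_setOf_eq, smul_eq_mul, map_mul, Module.End.mul_apply] at *
    rw [hq, map_zero]

lemma mem_annIdeal_iff (v : V) (q : F[X]) : q ∈ annIdeal α v ↔ (aeval α q) v = 0 :=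
  Iff.rfl

/-- If charpoly is irreducible and `v ≠ 0`, then any nonzero annihilating polynomial
of `v` has degree at least `finrank F V`. -/
lemma aux_deg_le (h : Irreducible (LinearMap.charpoly α)) {v : V} (hv : v ≠ 0)
    {q : F[X]} (hq : (aeval α q) v = 0) (hq0 : q ≠ 0) :
    Module.finrank F V ≤ q.natDegree := by
  set I := annIdeal α v with hI
  have hC : LinearMap.charpoly α ∈ I := by
    show (aeval α (LinearMap.charpoly α)) v = 0
    rw [LinearMap.aeval_self_charpoly]
    rfl
  have hle : Ideal.span ({LinearMap.charpoly α} : Set F[X]) ≤ I := by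
    rw [Ideal.span_le, Set.singleton_subset_iff]
    exact hC
  have hne : I ≠ ⊤ := by
    intro htop
    have h1 : (1 : F[X]) ∈ I := htop ▸ Submodule.mem_top
    have : (aeval α (1 : F[X])) v = 0 := h1
    simp at this
    exact hv this
  have hmax := PrincipalIdealRing.isMaximal_of_irreducible h
  have heq : Ideal.span ({LinearMap.charpoly α} : Set F[X]) = I :=
    hmax.eq_of_le hne hle
  have hdvd : LinearMap.charpoly α ∣ q := by
    rw [← Ideal.mem_span_singleton, heq]
    exact hq
  calc Module.finrank F V = (LinearMap.charpoly α).natDegree :=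
        (LinearMap.charpoly_natDegree α).symm
    _ ≤ q.natDegree := Polynomial.natDegree_le_of_dvd hdvd hq0

end Aux

/-- Let `F` be a field, `V` a nontrivial finite-dimensional
`F`-vector space and `α : V → V` an `F`-linear map.  Then the characteristic polynomial
of `α` is irreducible in `F[X]` iff there is no `α`-invariant subspace `W` of `V` with
`W ≠ 0` and `W ≠ V`. -/
theorem stmt_12 (F : Type*) [Field F] (V : Type*) [AddCommGroup V] [Module F V]
    [FiniteDimensional F V] [Nontrivial V] (α : V →ₗ[F] V) :
    Irreducible (LinearMap.charpoly α) ↔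
      ¬ ∃ W : Submodule F V, W ≠ ⊥ ∧ W ≠ ⊤ ∧ ∀ x ∈ W, α x ∈ W := by
  classical
  set d := Module.finrank F V with hd
  have hd0 : 0 < d := Module.finrank_pos
  have hα_int : IsIntegral F α :=
    ⟨LinearMap.charpoly α, LinearMap.charpoly_monic α, LinearMap.aeval_self_charpoly α⟩
  constructor
  · -- irreducible → no nontrivial invariant subspace
    rintro h ⟨W, hW0, hWtop, hWinv⟩
    obtain ⟨v, hvW, hv⟩ := Submodule.exists_mem_ne_zero_of_ne_bot hW0
    -- all powers of α applied to v stay in W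
    have hpow : ∀ i : ℕ, (α ^ i) v ∈ W := by
      intro i
      induction i with
      | zero => simpa using hvW
      | succ n ih =>
        have : (α ^ (n + 1)) v = α ((α ^ n) v) := by
          rw [pow_succ']; rfl
        rw [this]
        exact hWinv _ ih
    -- the family v, αv, ..., α^(d-1) v is linearly independent
    have hli : LinearIndependent F (fun i : Fin d => (α ^ (i : ℕ)) v) := by
      rw [Fintype.linearIndependent_iff]
      intro c hc i
      set q : F[X] := ∑ j : Fin d, C (c j) * X ^ (j : ℕ) with hqdef
      have haq : (aeval α q) v = 0 := by
        rw [hqdef]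
        rw [map_sum]
        simp only [map_mul, aeval_C, aeval_X_pow, LinearMap.sum_apply]
        simpa [Module.End.mul_apply, Algebra.algebraMap_eq_smul_one,
          LinearMap.smul_apply, Module.End.one_apply] using hc
      have hq0 : q = 0 := by
        by_contra hq0
        have hge := aux_deg_le α h hv haq hq0
        have hlt : q.natDegree < d := by
          have hdeg : q.degree < (d : ℕ) := by
            refine lt_of_le_of_lt (Polynomial.degree_sum_le _ _) ?_
            rw [Finset.sup_lt_iff (by exact_mod_cast WithBot.bot_lt_coe d)]
            intro j _
            refine lt_of_le_of_lt (Polynomial.degree_C_mul_X_pow_le _ _) ?_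
            exact_mod_cast j.isLt
          exact (Polynomial.natDegree_lt_iff_degree_lt hq0).mpr hdeg
        omega
      -- extract coefficient i
      have : q.coeff (i : ℕ) = c i := by
        rw [hqdef, Polynomial.finset_sum_coeff]
        rw [Finset.sum_eq_single i]
        · simp [Polynomial.coeff_C_mul, Polynomial.coeff_X_pow]
        · intro j _ hji
          simp only [Polynomial.coeff_C_mul, Polynomial.coeff_X_pow]
          rw [if_neg (fun hji' => hji (Fin.ext hji'.symm))]
          ring
        · simp
      rw [hq0] at this
      simpa using this.symm
    -- hence W has dimension at least d, so W = ⊤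
    have hspan : Submodule.span F (Set.range fun i : Fin d => (α ^ (i : ℕ)) v) ≤ W := by
      rw [Submodule.span_le]
      rintro _ ⟨i, rfl⟩
      exact hpow _
    have hrank : d ≤ Module.finrank F W := by
      calc d = Fintype.card (Fin d) := (Fintype.card_fin d).symm
        _ = Module.finrank F (Submodule.span F (Set.range fun i : Fin d => (α ^ (i : ℕ)) v)) :=
          (finrank_span_eq_card hli).symm
        _ ≤ Module.finrank F W := Submodule.finrank_mono hspan
    have : W = ⊤ := Submodule.eq_top_of_finrank_eq
      (le_antisymm (Submodule.finrank_le W) hrank)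
    exact hWtop this
  · -- no nontrivial invariant subspace → irreducible
    intro h
    -- first: the minimal polynomial has degree ≥ d
    set m := (minpoly F α).natDegree with hm
    have hmp0 : minpoly F α ≠ 0 := minpoly.ne_zero hα_int
    have hm0 : 0 < m := minpoly.natDegree_pos hα_int
    have hdm : d ≤ m := by
      obtain ⟨v, hv⟩ := exists_ne (0 : V)
      set S := Submodule.span F (Set.range fun i : Fin m => (α ^ (i : ℕ)) v) with hS
      -- every aeval of a poly of degree < m applied to v lies in S
      have hmemS : ∀ q : F[X], q.natDegree < m → (aeval α q) v ∈ S := by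
        intro q hq
        rw [Polynomial.aeval_eq_sum_range' (lt_of_lt_of_le hq le_rfl)]
        rw [LinearMap.sum_apply]
        refine Submodule.sum_mem S ?_
        intro i hi
        rw [Finset.mem_range] at hi
        rw [LinearMap.smul_apply]
        exact Submodule.smul_mem S _
          (Submodule.subset_span ⟨⟨i, hi⟩, rfl⟩)
      -- α^j v ∈ S for all j ≤ m
      have hpowS : ∀ j : ℕ, j ≤ m → (α ^ j) v ∈ S := by
        intro j hj
        rcases lt_or_eq_of_le hj with hj | hj
        · exact Submodule.subset_span ⟨⟨j, hj⟩, rfl⟩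
        · -- j = m : use the minimal polynomial relation
          rw [hj]
          have hrel : (aeval α (minpoly F α)) v = 0 := by
            rw [minpoly.aeval]; rfl
          have hXm : (α ^ m) v = (aeval α (X ^ m - minpoly F α)) v := by
            rw [map_sub, LinearMap.sub_apply, hrel, sub_zero, aeval_X_pow]
          rw [hXm]
          by_cases hz : X ^ m - minpoly F α = 0
          · rw [hz]; simp
          · apply hmemS
            have hmonic : (minpoly F α).Monic := minpoly.monic hα_int
            have hdeg : (X ^ m - minpoly F α).degree < (minpoly F α).degree := by
              have h1 : (X ^ m : F[X]).degree = (minpoly F α).degree := by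
                rw [Polynomial.degree_X_pow, Polynomial.degree_eq_natDegree hmp0]
              have h2 : (X ^ m : F[X]).leadingCoeff = (minpoly F α).leadingCoeff := by
                rw [Polynomial.leadingCoeff_X_pow, hmonic.leadingCoeff]
              calc (X ^ m - minpoly F α).degree < (X ^ m : F[X]).degree :=
                    Polynomial.degree_sub_lt h1 (pow_ne_zero m Polynomial.X_ne_zero) h2
                _ = (minpoly F α).degree := h1
            have := Polynomial.natDegree_lt_natDegree hz hdeg
            exact this
      -- S is invariant
      have hSinv : ∀ x ∈ S, α x ∈ S := by
        intro x hx
        have : S ≤ Submodule.comap α S := by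
          rw [hS, Submodule.span_le]
          rintro _ ⟨i, rfl⟩
          simp only [SetLike.mem_coe, Submodule.mem_comap]
          have : α ((α ^ (i : ℕ)) v) = (α ^ ((i : ℕ) + 1)) v := by
            rw [pow_succ']; rfl
          rw [this]
          exact hpowS _ (Nat.succ_le_of_lt i.isLt)
        exact this hx
      -- S is nonzero
      have hS0 : S ≠ ⊥ := by
        intro hbot
        have hvS : v ∈ S := Submodule.subset_span ⟨⟨0, hm0⟩, by simp⟩
        rw [hbot, Submodule.mem_bot] at hvS
        exact hv hvS
      have hStop : S = ⊤ := by
        by_contra hne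
        exact h ⟨S, hS0, hne, hSinv⟩
      calc d ≤ Fintype.card (Fin m) := finrank_le_of_span_eq_top hStop
        _ = m := Fintype.card_fin m
    -- now prove irreducibility of the characteristic polynomial
    have hcd : (LinearMap.charpoly α).natDegree = d := LinearMap.charpoly_natDegree α
    have hcm : (LinearMap.charpoly α).Monic := LinearMap.charpoly_monic α
    constructor
    · exact Polynomial.not_isUnit_of_natDegree_pos _ (by omega)
    · intro a b hab
      by_contra hcon
      push_neg at hcon
      obtain ⟨ha, hb⟩ := hcon
      have hc0 : LinearMap.charpoly α ≠ 0 := hcm.ne_zero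
      have ha0 : a ≠ 0 := fun h0 => hc0 (by rw [hab, h0, zero_mul])
      have hb0 : b ≠ 0 := fun h0 => hc0 (by rw [hab, h0, mul_zero])
      have key : ∀ p : F[X], p ≠ 0 → ¬ IsUnit p → 0 < p.natDegree := by
        intro p hp hu
        rcases Nat.eq_zero_or_pos p.natDegree with h0 | h0
        · exfalso
          apply hu
          apply Polynomial.isUnit_iff_degree_eq_zero.mpr
          rw [Polynomial.degree_eq_natDegree hp, h0]
          rfl
        · exact h0
      have hda : 0 < a.natDegree := key a ha0 ha
      have hdb : 0 < b.natDegree := key b hb0 hb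
      have hsum : a.natDegree + b.natDegree = d := by
        rw [← hcd, hab, Polynomial.natDegree_mul ha0 hb0]
      -- the kernel of aeval α a is an invariant subspace
      set K := LinearMap.ker (aeval α a) with hK
      have hKinv : ∀ x ∈ K, α x ∈ K := by
        intro x hx
        rw [hK, LinearMap.mem_ker] at *
        rw [aux_aeval_comm, hx, map_zero]
      have hcomp : ∀ x : V, (aeval α a) ((aeval α b) x) = 0 := by
        intro x
        have : aeval α (a * b) = 0 := by
          rw [← hab, LinearMap.aeval_self_charpoly]
        have h2 := congrArg (fun f : V →ₗ[F] V => f x) this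
        simpa [map_mul, Module.End.mul_apply] using h2
      have hKne : K ≠ ⊥ ∧ K ≠ ⊤ → False := by
        rintro ⟨h1, h2⟩
        exact h ⟨K, h1, h2, hKinv⟩
      apply hKne
      constructor
      · -- K ≠ ⊥ : otherwise aeval α b = 0 contradicting minimality
        intro hbot
        have hinj : Function.Injective (aeval α a) := by
          rw [← LinearMap.ker_eq_bot, ← hK]; exact hbot
        have hbz : aeval α b = 0 := by
          ext x
          show (aeval α b) x = 0
          apply hinj
          rw [map_zero]
          exact hcomp x
        have hdvd : minpoly F α ∣ b := minpoly.dvd F α hbz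
        have := Polynomial.natDegree_le_of_dvd hdvd hb0
        omega
      · -- K ≠ ⊤ : otherwise aeval α a = 0 contradicting minimality
        intro htop
        have haz : aeval α a = 0 := by
          ext x
          have : x ∈ K := htop ▸ Submodule.mem_top
          rw [hK, LinearMap.mem_ker] at this
          simpa using this
        have hdvd : minpoly F α ∣ a := minpoly.dvd F α haz
        have := Polynomial.natDegree_le_of_dvd hdvd ha0
        omega
end

section
/- Let p be a prime, m ≥ 1, and let A′ ≤ A be a φ-invariant subgroup (i.e. φ(A′) ≤ A′) that is pure in A, i.e. for every a ∈ A and every integer k ≥ 1, if k·a ∈ A′ then a ∈ A′. For s ≥ 1 define K_{pˢ} := {a ∈ A ∣ φʲ(a) ∈ A′ + pˢA for some j ≥ 0}. Then for every a ∈ A, if p^{m−1}·a ∈ K_{pᵐ} then a ∈ K_{p}. -/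
open Subgroup

/-- Let `p` be a prime, `m ≥ 1`, and `A' ≤ A` a `φ`-invariant pure
subgroup.  With `K_{p^s} := {a ∈ A ∣ φ^j(a) ∈ A' + p^s·A for some j ≥ 0}`, if
`p^(m-1)·a ∈ K_{p^m}` then `a ∈ K_p`.  (Written multiplicatively: `p^(m-1)·a = a^(p^(m-1))`
and `A' + p^s·A` is the subgroup generated by `A'` and the `p^s`-th powers.) -/
theorem stmt_14 (n : ℕ) (hn : 1 ≤ n)
    (φ : FreeAb n →* FreeAb n) (hφ : Function.Injective φ)
    (p : ℕ) (hp : p.Prime) (m : ℕ) (hm : 1 ≤ m)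
    (A' : Subgroup (FreeAb n)) (hinv : ∀ a ∈ A', φ a ∈ A')
    (hpure : ∀ a : FreeAb n, ∀ k : ℕ, 1 ≤ k → a ^ k ∈ A' → a ∈ A') :
    ∀ a : FreeAb n,
      (∃ j : ℕ, (⇑φ)^[j] (a ^ p ^ (m - 1)) ∈
          A' ⊔ Subgroup.map (powMonoidHom (p ^ m) : FreeAb n →* FreeAb n) ⊤) →
      ∃ j : ℕ, (⇑φ)^[j] a ∈
        A' ⊔ Subgroup.map (powMonoidHom p : FreeAb n →* FreeAb n) ⊤ := by
  intro a ⟨j, hj⟩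
  refine ⟨j, ?_⟩
  rw [Subgroup.mem_sup] at hj ⊢
  obtain ⟨y, hy, z, hz, hyz⟩ := hj
  obtain ⟨b, -, rfl⟩ := hz
  set x := (⇑φ)^[j] a with hx
  rw [iterate_map_pow φ] at hyz
  have hpm : p ^ m = p * p ^ (m - 1) := by
    rw [← pow_succ', Nat.sub_add_cancel hm]
  have key : (x * (b ^ p)⁻¹) ^ p ^ (m - 1) ∈ A' := by
    have : (x * (b ^ p)⁻¹) ^ p ^ (m - 1) = y := by
      rw [mul_pow, ← hyz, powMonoidHom_apply, inv_pow, ← pow_mul, ← hpm]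
      group
    rw [this]; exact hy
  have hxb : x * (b ^ p)⁻¹ ∈ A' :=
    hpure _ _ (Nat.one_le_iff_ne_zero.mpr (pow_ne_zero _ hp.pos.ne')) key
  refine ⟨x * (b ^ p)⁻¹, hxb, b ^ p, ⟨b, trivial, rfl⟩, ?_⟩
  group
end

section
/- Let p be a prime, m ≥ 1, and let A′ ≤ A be a φ-invariant subgroup (i.e. φ(A′) ≤ A′). Define K := {a ∈ A ∣ φʲ(a) ∈ A′ + pᵐA for some j ≥ 0} (writing A additively). Then there exists a finite-index normal subgroup Ḡ of G with Ḡ ∩ A = K. -/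
open Subgroup

/-- Let `p` be a prime, `m ≥ 1`, and `A' ≤ A` a `φ`-invariant
subgroup, and let `K := {a ∈ A ∣ φ^j(a) ∈ A' + p^m·A for some j ≥ 0}`.  Then there is a
finite-index normal subgroup `Gbar` of `G = A∗_φ` with `Gbar ∩ A = K`. -/
theorem stmt_15 (n : ℕ) (hn : 1 ≤ n)
    (φ : FreeAb n →* FreeAb n) (hφ : Function.Injective φ)
    (p : ℕ) (hp : p.Prime) (m : ℕ) (hm : 1 ≤ m)
    (A' : Subgroup (FreeAb n)) (hinv : ∀ a ∈ A', φ a ∈ A') :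
    ∃ Gbar : Subgroup (AscHNN φ hφ), Gbar.Normal ∧ Gbar.FiniteIndex ∧
      ∀ a : FreeAb n,
        ((HNNExtension.of a : AscHNN φ hφ) ∈ Gbar ↔
          ∃ j : ℕ, (⇑φ)^[j] a ∈
            A' ⊔ Subgroup.map (powMonoidHom (p ^ m) : FreeAb n →* FreeAb n) ⊤) := by
  classical
  set B : Subgroup (FreeAb n) :=
    A' ⊔ Subgroup.map (powMonoidHom (p ^ m) : FreeAb n →* FreeAb n) ⊤ with hBdef
  haveI : B.Normal := Subgroup.normal_of_comm B
  haveI : NeZero (p ^ m) := ⟨pow_ne_zero m hp.ne_zero⟩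
  -- φ maps B into B
  have hBcomap : B ≤ B.comap φ := by
    rw [hBdef]
    apply sup_le
    · intro a ha
      exact Subgroup.mem_comap.2 (Subgroup.mem_sup_left (hinv a ha))
    · rw [Subgroup.map_le_iff_le_comap]
      intro x _
      refine Subgroup.mem_comap.2 (Subgroup.mem_comap.2 (Subgroup.mem_sup_right ?_))
      refine ⟨φ x, Subgroup.mem_top _, ?_⟩
      simp [powMonoidHom_apply, map_pow]
  -- the finite quotient Q = A / B
  set Q := FreeAb n ⧸ B with hQdef
  set π : FreeAb n →* Q := QuotientGroup.mk' B with hπdef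
  -- Q is finite
  haveI : Finite Q := by
    refine Finite.of_surjective
      (fun v : Fin n → ZMod (p ^ m) => π (Multiplicative.ofAdd fun i => ((v i).val : ℤ))) ?_
    intro q
    obtain ⟨x, rfl⟩ := QuotientGroup.mk'_surjective B q
    set u : Fin n → ℤ := Multiplicative.toAdd x with hu
    refine ⟨fun i => ((u i : ZMod (p ^ m))), ?_⟩
    set w : Fin n → ℤ := fun i => (((u i : ZMod (p ^ m))).val : ℤ) with hw
    have hdvd : ∀ i, ((p : ℤ) ^ m) ∣ (u i - w i) := by
      intro i
      have : ((u i - w i : ℤ) : ZMod (p ^ m)) = 0 := by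
        push_cast
        simp [hw, ZMod.natCast_val, ZMod.intCast_cast, ZMod.cast_id]
      have := (ZMod.intCast_zmod_eq_zero_iff_dvd _ _).1 this
      exact_mod_cast this
    show π _ = π x
    apply QuotientGroup.eq.mpr
    have : (Multiplicative.ofAdd w)⁻¹ * x
        = (Multiplicative.ofAdd (fun i => (u i - w i) / (p ^ m : ℤ))) ^ (p ^ m) := by
      apply Multiplicative.toAdd.injective
      funext i
      have h1 : Multiplicative.toAdd ((Multiplicative.ofAdd
          (fun i => (u i - w i) / (p ^ m : ℤ))) ^ (p ^ m)) i
          = (p ^ m : ℤ) * ((u i - w i) / (p ^ m : ℤ)) := by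
        simp [toAdd_pow, mul_comm]
      rw [h1, Int.mul_ediv_cancel' (by exact_mod_cast hdvd i)]
      simp [hw]
      ring
    rw [this]
    exact Subgroup.mem_sup_right ⟨_, Subgroup.mem_top _, rfl⟩
  -- induced endomorphism of Q
  set ψ : Q →* Q := QuotientGroup.map B B φ hBcomap with hψdef
  have hψπ : ∀ x : FreeAb n, ψ (π x) = π (φ x) := fun x => QuotientGroup.map_mk' B B φ hBcomap x
  have hiter : ∀ (j : ℕ) (x : FreeAb n), (⇑ψ)^[j] (π x) = π ((⇑φ)^[j] x) := by
    intro j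
    induction j with
    | zero => intro x; rfl
    | succ k ih =>
      intro x
      rw [Function.iterate_succ_apply, Function.iterate_succ_apply, hψπ, ih]
  have hup : ∀ (j k : ℕ) (q : Q), (⇑ψ)^[j] q = 1 → (⇑ψ)^[k + j] q = 1 := by
    intro j k q h
    rw [Function.iterate_add_apply, h, iterate_map_one]
  -- the eventual kernel
  set K : Subgroup Q :=
    { carrier := {q | ∃ j : ℕ, (⇑ψ)^[j] q = 1}
      one_mem' := ⟨0, rfl⟩
      mul_mem' := by
        rintro a b ⟨j, hj⟩ ⟨k, hk⟩
        refine ⟨k + j, ?_⟩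
        have hb' : (⇑ψ)^[k + j] b = 1 := by rw [add_comm]; exact hup k j b hk
        rw [iterate_map_mul, hup j k a hj, hb', mul_one]
      inv_mem' := by
        rintro a ⟨j, hj⟩
        exact ⟨j, by rw [iterate_map_inv, hj, inv_one]⟩ } with hKdef
  have hKmem : ∀ q : Q, q ∈ K ↔ ∃ j : ℕ, (⇑ψ)^[j] q = 1 := fun q => Iff.rfl
  haveI : K.Normal := Subgroup.normal_of_comm K
  have hKinv : K ≤ K.comap ψ := by
    rintro q ⟨j, hj⟩
    refine Subgroup.mem_comap.2 ⟨j, ?_⟩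
    rw [← Function.iterate_succ_apply, Function.iterate_succ_apply', hj, map_one]
  set Qb := Q ⧸ K with hQbdef
  haveI : Finite Qb := Quotient.finite _
  set ψb : Qb →* Qb := QuotientGroup.map K K ψ hKinv with hψbdef
  have hψbinj : Function.Injective ψb := by
    rw [injective_iff_map_eq_one]
    intro q h
    obtain ⟨x, rfl⟩ := QuotientGroup.mk'_surjective K q
    have h2 : ((ψ x : Q) : Qb) = 1 := by
      rw [hψbdef] at h
      rwa [QuotientGroup.mk'_apply, QuotientGroup.map_mk] at h
    rw [QuotientGroup.eq_one_iff] at h2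
    obtain ⟨j, hj⟩ := h2
    have : x ∈ K := ⟨j + 1, by rw [Function.iterate_succ_apply]; exact hj⟩
    exact (QuotientGroup.eq_one_iff x).mpr this
  have hψbsurj : Function.Surjective ψb := Finite.surjective_of_injective hψbinj
  set ψe : Qb ≃* Qb := MulEquiv.ofBijective ψb ⟨hψbinj, hψbsurj⟩ with hψedef
  -- target finite group
  haveI : Finite (MulAut Qb) :=
    Finite.of_injective (fun e => (e : Qb → Qb)) DFunLike.coe_injective
  set T := SemidirectProduct Qb (MulAut Qb) (MonoidHom.id (MulAut Qb)) with hTdef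
  haveI : Finite T := by
    refine Finite.of_injective (fun g : T => (g.left, g.right)) ?_
    intro a b h
    exact SemidirectProduct.ext (congrArg Prod.fst h) (congrArg Prod.snd h)
  set πb : FreeAb n →* Qb := (QuotientGroup.mk' K).comp π with hπbdef
  set f0 : FreeAb n →* T := SemidirectProduct.inl.comp πb with hf0def
  set x : T := SemidirectProduct.inr (φ := MonoidHom.id (MulAut Qb)) ψe with hxdef
  have hψeπb : ∀ a : FreeAb n, ψe (πb a) = πb (φ a) := by
    intro a
    show ψb (πb a) = πb (φ a)
    rw [hπbdef, hψbdef]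
    simp only [MonoidHom.comp_apply, QuotientGroup.mk'_apply]
    rw [QuotientGroup.map_mk, hψπ]
  have hx : ∀ a : (⊤ : Subgroup (FreeAb n)),
      x * f0 ↑a = f0 ((ascIso φ hφ a : φ.range) : FreeAb n) * x := by
    intro a
    have hcoe : ((ascIso φ hφ a : φ.range) : FreeAb n) = φ ↑a := rfl
    rw [hcoe, hf0def]
    simp only [MonoidHom.comp_apply]
    rw [← hψeπb]
    have h5 := SemidirectProduct.inl_aut (φ := MonoidHom.id (MulAut Qb)) ψe (πb ↑a)
    simp only [MonoidHom.id_apply] at h5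
    rw [hxdef, h5, mul_assoc, ← map_mul, inv_mul_cancel, map_one, mul_one]
  set F : AscHNN φ hφ →* T := HNNExtension.lift f0 x hx with hFdef
  refine ⟨F.ker, inferInstance, ?_, ?_⟩
  · haveI : Finite F.range := inferInstance
    exact Subgroup.finiteIndex_ker F
  · intro a
    rw [MonoidHom.mem_ker, hFdef, HNNExtension.lift_of]
    rw [hf0def]
    simp only [MonoidHom.comp_apply]
    rw [show ((1 : T) = SemidirectProduct.inl (1 : Qb)) from (map_one _).symm]
    rw [SemidirectProduct.inl_injective.eq_iff]
    rw [hπbdef]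
    simp only [MonoidHom.comp_apply, QuotientGroup.mk'_apply]
    rw [QuotientGroup.eq_one_iff]
    rw [hKmem]
    constructor
    · rintro ⟨j, hj⟩
      rw [hiter j a] at hj
      exact ⟨j, (QuotientGroup.eq_one_iff _).mp hj⟩
    · rintro ⟨j, hj⟩
      refine ⟨j, ?_⟩
      rw [hiter j a]
      exact (QuotientGroup.eq_one_iff _).mpr hj
end

section
/- Let G = N ⋊ M be a semidirect product of groups, where N is finitely generated and every subgroup of N is separable in N, and where M is subgroup separable (every finitely generated subgroup of M is separable in M). Then G is subgroup separable: every finitely generated subgroup of G is separable in G. -/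
/-!
Let `π : N ⋊ M → M` be the projection and `g ∉ K`. If `π g ∉ π K`, separability of the finitely
generated subgroup `π K` of `M` pulls back along `π`. Otherwise `g ∈ inl a * K` with `inl a ∉ K`.
Separating `a` from `K ∩ N` in `N` and shrinking the separating subgroup to a characteristic one
`C` (possible since `N` is finitely generated) makes `inl C` normal, so `W = K * inl C` is a
subgroup with `inl a ∉ W`.
Its `M`-part `W ∩ M` has finite index in `π K`, so it is finitely generated and hence separable
in `M`; this yields a finite-index `V ≤ M` with `inl a * V` disjoint from `W`, and then the normal
core of `C ⋊ V` separates `g` from `K`.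
-/

open Subgroup Pointwise

open SemidirectProduct

instance MonoidHom.finite_of_groupFG {G P : Type*} [Group G] [Group P] [Group.FG G] [Finite P] :
    Finite (G →* P) := by
  obtain ⟨S, hS⟩ := ‹Group.FG G›.out
  exact Finite.of_injective (fun f : G →* P => fun s : S => f s) fun f g hfg =>
    MonoidHom.eq_of_eqOn_dense hS fun x hx => congrFun hfg ⟨x, hx⟩

namespace Subgroup

variable {G G' : Type*} [Group G] [Group G']

instance finiteIndex_comap (L : Subgroup G) [L.FiniteIndex] (f : G' →* G) :
    (L.comap f).FiniteIndex :=
  ⟨index_comap L f ▸ isFiniteRelIndex_of_finiteIndex.relIndex_ne_zero⟩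

theorem FG.map {K : Subgroup G} (hK : K.FG) (f : G →* G') : (K.map f).FG := by
  rw [← Group.fg_iff_subgroup_fg] at hK ⊢
  exact Group.fg_of_surjective (f.subgroupMap_surjective K)

theorem FG.of_le_of_relIndex_ne_zero {T U : Subgroup G} (hU : U.FG) (hTU : T ≤ U)
    (hT : T.relIndex U ≠ 0) : T.FG := by
  have : Group.FG U := (Group.fg_iff_subgroup_fg U).mpr hU
  have : (T.subgroupOf U).FiniteIndex := ⟨hT⟩
  have hfg := ((Group.fg_iff_subgroup_fg (T.subgroupOf U)).mp inferInstance).map U.subtype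
  rwa [subgroupOf_map_subtype, inf_of_le_left hTU] at hfg

theorem Characteristic.apply_mem {C : Subgroup G} [C.Characteristic] (σ : G ≃* G) {c : G}
    (hc : c ∈ C) : σ c ∈ C :=
  characteristic_iff_le_comap.mp ‹_› σ hc

theorem characteristic_iInf_ker (Q : Type*) [Group Q] :
    (⨅ f : G →* Q, f.ker).Characteristic :=
  characteristic_iff_le_comap.mpr fun σ _ hx =>
    mem_iInf.mpr fun f => mem_iInf.mp hx (f.comp σ.toMonoidHom)

theorem exists_characteristic_finiteIndex_le [Group.FG G] (H : Subgroup G) [H.FiniteIndex] :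
    ∃ C : Subgroup G, C.Characteristic ∧ C.FiniteIndex ∧ C ≤ H :=
  ⟨⨅ f : G →* Equiv.Perm (G ⧸ H), f.ker, characteristic_iInf_ker _,
    finiteIndex_iInf fun _ => inferInstance,
    (iInf_le _ (MulAction.toPermHom G (G ⧸ H))).trans (normalCore_eq_ker H ▸ normalCore_le H)⟩

def IsSeparable (K : Subgroup G) : Prop :=
  ∀ g ∉ K, ∃ L : Subgroup G, L.Normal ∧ L.FiniteIndex ∧ g ∉ (K : Set G) * L

theorem IsSeparable.comap {K : Subgroup G} (hK : K.IsSeparable) (f : G' →* G) :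
    (K.comap f).IsSeparable := by
  intro g hg
  obtain ⟨L, hL, _, hgL⟩ := hK (f g) hg
  refine ⟨L.comap f, hL.comap f, inferInstance, ?_⟩
  rintro ⟨k, hk, l, hl, rfl⟩
  exact hgL ⟨f k, hk, f l, hl, (map_mul f k l).symm⟩

theorem IsSeparable.exists_of_le {K K' : Subgroup G} (hK' : K'.IsSeparable) (hKK' : K ≤ K')
    {g : G} (hg : g ∉ K') :
    ∃ L : Subgroup G, L.Normal ∧ L.FiniteIndex ∧ g ∉ (K : Set G) * L :=
  (hK' g hg).imp fun _ ⟨hL, hLfi, hgL⟩ =>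
    ⟨hL, hLfi, fun h => hgL (Set.mul_subset_mul_right hKK' h)⟩

theorem IsSeparable.exists_forall_mul_apply_notMem (f : G' →* G) {W : Subgroup G}
    (hW : (W.comap f).IsSeparable) {x : G} (hx : x ∉ W) :
    ∃ V : Subgroup G', V.FiniteIndex ∧ ∀ v ∈ V, x * f v ∉ W := by
  by_cases hs : ∃ s, x * f s ∈ W
  · obtain ⟨s, hs⟩ := hs
    have hsW : s⁻¹ ∉ W.comap f := fun h => hx (by simpa using W.mul_mem hs h)
    obtain ⟨V, -, hV, hsV⟩ := hW _ hsW
    refine ⟨V, hV, fun v hv hxv => hsV ⟨s⁻¹ * v, ?_, v⁻¹, V.inv_mem hv, by group⟩⟩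
    have := W.mul_mem (W.inv_mem hs) hxv
    rwa [mul_inv_rev, mul_assoc, inv_mul_cancel_left, ← map_inv, ← map_mul] at this
  · exact ⟨⊤, inferInstance, fun v _ => not_exists.mp hs v⟩

end Subgroup

namespace SemidirectProduct

variable {N M : Type*} [Group N] [Group M] {φ : M →* MulAut N}

theorem inv_inl_left_mul (x : N ⋊[φ] M) : (inl x.left)⁻¹ * x = inr x.right :=
  inv_mul_eq_iff_eq_mul.mpr (inl_left_mul_inr_right x).symm

variable (φ) in
/-- The subgroup `C ⋊ M`. -/
def leftSubgroup (C : Subgroup N) [C.Characteristic] : Subgroup (N ⋊[φ] M) where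
  carrier := {x | x.left ∈ C}
  one_mem' := C.one_mem
  mul_mem' {x _} hx hy := C.mul_mem hx (Characteristic.apply_mem (φ x.right) hy)
  inv_mem' hx := Characteristic.apply_mem _ (C.inv_mem hx)

variable {C : Subgroup N} [C.Characteristic]

theorem mem_leftSubgroup {x : N ⋊[φ] M} : x ∈ leftSubgroup φ C ↔ x.left ∈ C := Iff.rfl

instance [C.FiniteIndex] : (leftSubgroup φ C).FiniteIndex := by
  have : Finite ((N ⋊[φ] M) ⧸ leftSubgroup φ C) :=
    Finite.of_surjective (α := N ⧸ C) (Quotient.map' inl fun a b hab => ?_) fun q => ?_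
  · exact finiteIndex_of_finite_quotient
  · rw [QuotientGroup.leftRel_apply] at hab ⊢
    rwa [← map_inv, ← map_mul, mem_leftSubgroup, left_inl]
  · induction q using QuotientGroup.induction_on with | H x => ?_
    refine ⟨x.left, QuotientGroup.eq.mpr ?_⟩
    rw [mem_leftSubgroup, inv_inl_left_mul, left_inr]
    exact C.one_mem

instance : (C.map (inl : N →* N ⋊[φ] M)).Normal := by
  refine ⟨?_⟩
  rintro _ ⟨c, hc, rfl⟩ x
  refine ⟨x.left * φ x.right c * x.left⁻¹, ?_, ?_⟩
  · exact (normal_of_characteristic C).conj_mem _ (Characteristic.apply_mem _ hc) _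
  · ext <;> simp [mul_assoc]

theorem mem_comap_inl_mul_of_inl_mem_sup {K : Subgroup (N ⋊[φ] M)} {a : N}
    (ha : inl a ∈ K ⊔ C.map inl) : a ∈ (K.comap inl : Set N) * C := by
  rw [← SetLike.mem_coe, mul_normal] at ha
  obtain ⟨k, hk, _, ⟨c, hc, rfl⟩, hkc⟩ := ha
  refine ⟨a * c⁻¹, ?_, c, hc, inv_mul_cancel_right a c⟩
  dsimp only at hkc
  show inl (a * c⁻¹) ∈ K
  rwa [map_mul, map_inv, ← hkc, mul_inv_cancel_right]

theorem fg_comap_inr_sup_map_inl {K : Subgroup (N ⋊[φ] M)} (hK : K.FG) [C.FiniteIndex] :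
    ((K ⊔ C.map inl).comap inr).FG := by
  set W := K ⊔ C.map inl
  have hWmap : W.map rightHom = K.map rightHom := by
    rw [Subgroup.map_sup, map_map, rightHom_comp_inl, map_one_eq_bot, sup_bot_eq]
  refine (hK.map rightHom).of_le_of_relIndex_ne_zero
    (hWmap ▸ fun m hm => ⟨inr m, hm, rightHom_inr m⟩) ?_
  -- `W ∩ (C ⋊ M)`, which has finite index in `W`, projects into `W ∩ M`.
  have hle : leftSubgroup φ C ⊓ W ≤ (W.comap inr).comap rightHom := by
    rintro x ⟨hxC, hxW⟩
    have hinl : inl x.left ∈ W := mem_sup_right ⟨x.left, hxC, rfl⟩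
    simpa only [mem_comap, rightHom_eq_right, inv_inl_left_mul] using
      W.mul_mem (W.inv_mem hinl) hxW
  rw [← hWmap, ← relIndex_comap]
  intro h
  have hCW := relIndex_eq_zero_of_le_left hle h
  rw [inf_relIndex_right] at hCW
  exact isFiniteRelIndex_of_finiteIndex.relIndex_ne_zero hCW

theorem exists_inl_mul_inr_mem_of_inl_mem_mul {W : Subgroup (N ⋊[φ] M)} (hCW : C.map inl ≤ W)
    {V : Subgroup M} {a : N}
    (ha : inl a ∈ (W : Set (N ⋊[φ] M)) * (leftSubgroup φ C ⊓ V.comap rightHom)) :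
    ∃ v ∈ V, inl a * inr v ∈ W := by
  obtain ⟨w, hw, h, ⟨hhC, hhV⟩, hwh⟩ := ha
  refine ⟨h.right⁻¹, V.inv_mem hhV, ?_⟩
  have : inl a * inr h.right⁻¹ = w * inl h.left := by
    dsimp only at hwh
    rw [← hwh, map_inv, mul_assoc, mul_inv_eq_of_eq_mul (inl_left_mul_inr_right h).symm]
  exact this ▸ W.mul_mem hw (hCW ⟨_, hhC, rfl⟩)

theorem exists_normal_finiteIndex_inl_notMem_sup [Group.FG N]
    (hM : ∀ T : Subgroup M, T.FG → T.IsSeparable) {K : Subgroup (N ⋊[φ] M)} (hK : K.FG)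
    (hKN : (K.comap inl).IsSeparable) {a : N} (ha : a ∉ K.comap inl) :
    ∃ L : Subgroup (N ⋊[φ] M), L.Normal ∧ L.FiniteIndex ∧ inl a ∉ K ⊔ L := by
  obtain ⟨LN, -, _, haLN⟩ := hKN a ha
  obtain ⟨C, _, _, hCLN⟩ := exists_characteristic_finiteIndex_le LN
  set W := K ⊔ C.map inl
  have haW : inl a ∉ W := fun h =>
    haLN (Set.mul_subset_mul_left hCLN (mem_comap_inl_mul_of_inl_mem_sup h))
  obtain ⟨V, _, hV⟩ :=
    (hM _ (fg_comap_inr_sup_map_inl hK)).exists_forall_mul_apply_notMem inr haW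
  set H := leftSubgroup φ C ⊓ V.comap rightHom
  refine ⟨H.normalCore, H.normalCore_normal, inferInstance, fun haKL => ?_⟩
  rw [← SetLike.mem_coe, mul_normal] at haKL
  obtain ⟨v, hv, hav⟩ := exists_inl_mul_inr_mem_of_inl_mem_mul le_sup_right
    (Set.mul_subset_mul (SetLike.coe_subset_coe.mpr le_sup_left)
      (SetLike.coe_subset_coe.mpr H.normalCore_le) haKL)
  exact hV v hv hav

end SemidirectProduct

/-- Let `G = N ⋊ M`, where `N` is finitely generated and ERF (every
subgroup of `N` is separable in `N`) and `M` is subgroup separable.  Then `G` is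
subgroup separable: every finitely generated subgroup `K` of `G` is separable in `G`. -/
theorem stmt_19 (N : Type*) [Group N] (M : Type*) [Group M] (φ : M →* MulAut N)
    (hNfg : Group.FG N)
    (hNerf : ∀ K : Subgroup N, ∀ g : N, g ∉ K →
      ∃ L : Subgroup N, L.Normal ∧ L.FiniteIndex ∧ g ∉ ((K : Set N) * (L : Set N)))
    (hMss : ∀ K : Subgroup M, K.FG → ∀ g : M, g ∉ K →
      ∃ L : Subgroup M, L.Normal ∧ L.FiniteIndex ∧ g ∉ ((K : Set M) * (L : Set M))) :
    ∀ K : Subgroup (N ⋊[φ] M), K.FG → ∀ g : N ⋊[φ] M, g ∉ K →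
      ∃ L : Subgroup (N ⋊[φ] M), L.Normal ∧ L.FiniteIndex ∧
        g ∉ ((K : Set (N ⋊[φ] M)) * (L : Set (N ⋊[φ] M))) := by
  have hM : ∀ T : Subgroup M, T.FG → T.IsSeparable := hMss
  intro K hK g hg
  by_cases hgK : rightHom g ∈ K.map rightHom
  · obtain ⟨k, hk, hkg⟩ := hgK
    obtain ⟨a, hag⟩ : g * k⁻¹ ∈ (inl : N →* N ⋊[φ] M).range := by
      rw [range_inl_eq_ker_rightHom, MonoidHom.mem_ker, map_mul, map_inv, hkg, mul_inv_cancel]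
    have ha : a ∉ K.comap inl := fun h => hg <| by
      simpa only [hag, inv_mul_cancel_right] using K.mul_mem h hk
    obtain ⟨L, hL, hLfi, haL⟩ :=
      exists_normal_finiteIndex_inl_notMem_sup hM hK (hNerf _) ha
    refine ⟨L, hL, hLfi, fun hgKL => haL ?_⟩
    rw [← mul_normal] at hgKL
    rw [hag]
    exact mul_mem hgKL (inv_mem (mem_sup_left hk))
  · exact ((hM _ (hK.map _)).comap rightHom).exists_of_le (le_comap_map _ _) hgK
end
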